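/- arXiv:2307.04943 — 6 statements merged into one kernel-verified Lean document; each statement's English description precedes it below -/
import Mathlib

section
/- There is an absolute constant C > 0 such that for every r ∈ ℝ, every real t with |t| > 0, and every smooth compactly supported function ψ : ℝ → ℂ whose support does not contain 0, one has |∫_ℝ e^{i(t z² + z r)} ψ(z) dz| ≤ C |t|^{-3/2} ‖ ∂_z²(ψ(z)/z) + i r ∂_z(ψ(z)/z) ‖_{L¹(ℝ)}. -/
open MeasureTheory Real

lemma norm_exp_I_mul_real (x : ℝ) : ‖Complex.exp (Complex.I * x)‖ = 1 := by
  rw [mul_comm]; exact Complex.norm_exp_ofReal_mul_I x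

lemma norm_exp_I_mul_t_sq (t z : ℝ) : ‖Complex.exp (Complex.I * ((t : ℂ) * (z:ℂ) ^ 2))‖ = 1 := by
  have : ((t : ℂ) * (z:ℂ) ^ 2) = ((t * z ^ 2 : ℝ) : ℂ) := by push_cast; ring
  rw [this]; exact norm_exp_I_mul_real _

lemma fresnel_right (t : ℝ) (ht : 0 < t) (c d : ℝ) (hc : (Real.sqrt t)⁻¹ ≤ c) (hcd : c ≤ d) :
    ‖∫ z in c..d, Complex.exp (Complex.I * ((t : ℂ) * (z:ℂ) ^ 2))‖ ≤ (Real.sqrt t)⁻¹ := by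
  have hst : 0 < Real.sqrt t := Real.sqrt_pos.mpr ht
  have hc0 : 0 < c := lt_of_lt_of_le (inv_pos.mpr hst) hc
  have hd0 : 0 < d := lt_of_lt_of_le hc0 hcd
  have htC : (t : ℂ) ≠ 0 := by exact_mod_cast ht.ne'
  -- complex-differentiable antiderivative
  have hF : ∀ w : ℂ, w ≠ 0 →
      HasDerivAt (fun w : ℂ => Complex.exp (Complex.I * ((t:ℂ) * w ^ 2)) / (2 * Complex.I * t * w))
        (Complex.exp (Complex.I * ((t:ℂ) * w ^ 2))
          - Complex.exp (Complex.I * ((t:ℂ) * w ^ 2)) / (2 * Complex.I * t * w ^ 2)) w := by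
    intro w hw
    have h1 : HasDerivAt (fun w : ℂ => Complex.I * ((t:ℂ) * w ^ 2)) (Complex.I * t * (2 * w)) w := by
      have := (hasDerivAt_pow 2 w).const_mul (Complex.I * (t:ℂ))
      simpa [mul_comm, mul_assoc, mul_left_comm] using this
    have h2 := h1.cexp
    have h3 : HasDerivAt (fun w : ℂ => 2 * Complex.I * (t:ℂ) * w) (2 * Complex.I * t) w := by
      simpa using (hasDerivAt_id w).const_mul (2 * Complex.I * (t:ℂ))
    have hden : 2 * Complex.I * (t:ℂ) * w ≠ 0 := by
      simp [Complex.I_ne_zero, htC, hw]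
    have := h2.div h3 hden
    refine this.congr_deriv ?_
    field_simp [hw, htC, Complex.I_ne_zero]
  have hFr : ∀ z ∈ Set.uIcc c d,
      HasDerivAt (fun z : ℝ => Complex.exp (Complex.I * ((t:ℂ) * (z:ℂ) ^ 2)) / (2 * Complex.I * t * (z:ℂ)))
        (Complex.exp (Complex.I * ((t:ℂ) * (z:ℂ) ^ 2))
          - Complex.exp (Complex.I * ((t:ℂ) * (z:ℂ) ^ 2)) / (2 * Complex.I * t * (z:ℂ) ^ 2)) z := by
    intro z hz
    have hz0 : 0 < z := by
      rcases Set.mem_uIcc.mp hz with h | h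
      · exact lt_of_lt_of_le hc0 h.1
      · exact lt_of_lt_of_le hd0 h.1
    have : ((z:ℂ)) ≠ 0 := by exact_mod_cast hz0.ne'
    exact (hF (z:ℂ) this).comp_ofReal
  set f : ℝ → ℂ := fun z => Complex.exp (Complex.I * ((t:ℂ) * (z:ℂ) ^ 2)) with hf
  set g : ℝ → ℂ := fun z => Complex.exp (Complex.I * ((t:ℂ) * (z:ℂ) ^ 2)) / (2 * Complex.I * t * (z:ℂ) ^ 2) with hg
  have hcontf : Continuous f := by
    apply Continuous.cexp; continuity
  have hcontg : ContinuousOn g (Set.uIcc c d) := by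
    apply ContinuousOn.div hcontf.continuousOn
    · exact (Continuous.continuousOn (by fun_prop))
    · intro z hz
      have hz0 : 0 < z := by
        rcases Set.mem_uIcc.mp hz with h | h
        · exact lt_of_lt_of_le hc0 h.1
        · exact lt_of_lt_of_le hd0 h.1
      have : ((z:ℂ)) ≠ 0 := by exact_mod_cast hz0.ne'
      simp [Complex.I_ne_zero, htC, this]
  have hintf : IntervalIntegrable f volume c d := hcontf.intervalIntegrable c d
  have hintg : IntervalIntegrable g volume c d := hcontg.intervalIntegrable
  have key : ∫ z in c..d, (f z - g z) =
      (Complex.exp (Complex.I * ((t:ℂ) * (d:ℂ) ^ 2)) / (2 * Complex.I * t * (d:ℂ)))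
        - (Complex.exp (Complex.I * ((t:ℂ) * (c:ℂ) ^ 2)) / (2 * Complex.I * t * (c:ℂ))) :=
    intervalIntegral.integral_eq_sub_of_hasDerivAt hFr (hintf.sub hintg)
  have hsplit : ∫ z in c..d, f z =
      ((Complex.exp (Complex.I * ((t:ℂ) * (d:ℂ) ^ 2)) / (2 * Complex.I * t * (d:ℂ)))
        - (Complex.exp (Complex.I * ((t:ℂ) * (c:ℂ) ^ 2)) / (2 * Complex.I * t * (c:ℂ))))
      + ∫ z in c..d, g z := by
    rw [← key, intervalIntegral.integral_sub hintf hintg]; ring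
  -- norm of boundary terms
  have hbnorm : ∀ z : ℝ, 0 < z →
      ‖Complex.exp (Complex.I * ((t:ℂ) * (z:ℂ) ^ 2)) / (2 * Complex.I * t * (z:ℂ))‖ = (2*t*z)⁻¹ := by
    intro z hz
    rw [norm_div, norm_exp_I_mul_t_sq]
    have : ‖2 * Complex.I * (t:ℂ) * (z:ℂ)‖ = 2 * t * z := by
      simp [norm_mul, Complex.norm_real, abs_of_pos ht, abs_of_pos hz]
    rw [this, one_div]
  -- integral of real bound
  have hG : ∀ z ∈ Set.uIcc c d, HasDerivAt (fun z : ℝ => -(2*t*z)⁻¹) ((2*t*z^2)⁻¹) z := by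
    intro z hz
    have hz0 : 0 < z := by
      rcases Set.mem_uIcc.mp hz with h | h
      · exact lt_of_lt_of_le hc0 h.1
      · exact lt_of_lt_of_le hd0 h.1
    have h1 : HasDerivAt (fun z : ℝ => 2*t*z) (2*t) z := by
      simpa using (hasDerivAt_id z).const_mul (2*t)
    have h2 := (h1.inv (by positivity)).neg
    refine h2.congr_deriv ?_
    field_simp [hz0.ne', ht.ne']
  have hGcont : ContinuousOn (fun z : ℝ => (2*t*z^2)⁻¹) (Set.uIcc c d) := by
    apply ContinuousOn.inv₀ (Continuous.continuousOn (by fun_prop))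
    intro z hz
    have hz0 : 0 < z := by
      rcases Set.mem_uIcc.mp hz with h | h
      · exact lt_of_lt_of_le hc0 h.1
      · exact lt_of_lt_of_le hd0 h.1
    positivity
  have hGint : ∫ z in c..d, (2*t*z^2)⁻¹ = -(2*t*d)⁻¹ - -(2*t*c)⁻¹ :=
    intervalIntegral.integral_eq_sub_of_hasDerivAt hG hGcont.intervalIntegrable
  have hgb : ‖∫ z in c..d, g z‖ ≤ (2*t*c)⁻¹ - (2*t*d)⁻¹ := by
    calc ‖∫ z in c..d, g z‖ ≤ ∫ z in c..d, ‖g z‖ :=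
          intervalIntegral.norm_integral_le_integral_norm hcd
      _ = ∫ z in c..d, (2*t*z^2)⁻¹ := by
          apply intervalIntegral.integral_congr
          intro z hz
          have hz0 : 0 < z := by
            rcases Set.mem_uIcc.mp hz with h | h
            · exact lt_of_lt_of_le hc0 h.1
            · exact lt_of_lt_of_le hd0 h.1
          show ‖_ / _‖ = _
          rw [norm_div, norm_exp_I_mul_t_sq]
          have : ‖2 * Complex.I * (t:ℂ) * (z:ℂ)^2‖ = 2 * t * z^2 := by
            simp [norm_mul, Complex.norm_real, abs_of_pos ht, norm_pow, abs_of_pos hz0, _root_.sq_abs]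
          rw [this, one_div]
      _ = (2*t*c)⁻¹ - (2*t*d)⁻¹ := by rw [hGint]; ring
  have hbound : ‖∫ z in c..d, f z‖ ≤ (t*c)⁻¹ := by
    rw [hsplit]
    have h1 := norm_add_le
      ((Complex.exp (Complex.I * ((t:ℂ) * (d:ℂ) ^ 2)) / (2 * Complex.I * t * (d:ℂ)))
        - (Complex.exp (Complex.I * ((t:ℂ) * (c:ℂ) ^ 2)) / (2 * Complex.I * t * (c:ℂ))))
      (∫ z in c..d, g z)
    have h2 := norm_sub_le
      (Complex.exp (Complex.I * ((t:ℂ) * (d:ℂ) ^ 2)) / (2 * Complex.I * t * (d:ℂ)))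
      (Complex.exp (Complex.I * ((t:ℂ) * (c:ℂ) ^ 2)) / (2 * Complex.I * t * (c:ℂ)))
    rw [hbnorm d hd0, hbnorm c hc0] at h2
    have h3 : (2*t*d)⁻¹ + (2*t*c)⁻¹ + ((2*t*c)⁻¹ - (2*t*d)⁻¹) = (t*c)⁻¹ := by
      field_simp
      ring
    calc ‖_ + _‖ ≤ _ := h1
      _ ≤ ((2*t*d)⁻¹ + (2*t*c)⁻¹) + ((2*t*c)⁻¹ - (2*t*d)⁻¹) := add_le_add h2 hgb
      _ = (t*c)⁻¹ := h3
  refine hbound.trans ?_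
  rw [inv_le_inv₀ (by positivity) hst]
  calc Real.sqrt t = t * (Real.sqrt t)⁻¹ := by
        rw [eq_comm, mul_inv_eq_iff_eq_mul₀ hst.ne', Real.mul_self_sqrt ht.le]
    _ ≤ t * c := by nlinarith


lemma norm_exp_I_mul_t_sq' (t z : ℝ) : ‖Complex.exp (Complex.I * ((t : ℂ) * (z:ℂ) ^ 2))‖ = 1 := by
  have : ((t : ℂ) * (z:ℂ) ^ 2) = ((t * z ^ 2 : ℝ) : ℂ) := by push_cast; ring
  rw [this]; exact norm_exp_I_mul_real _

lemma fresnel_pos (t : ℝ) (ht : 0 < t) (a b : ℝ) :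
    ‖∫ z in a..b, Complex.exp (Complex.I * ((t : ℂ) * (z:ℂ) ^ 2))‖ ≤ 4 * (Real.sqrt t)⁻¹ := by
  set f : ℝ → ℂ := fun z => Complex.exp (Complex.I * ((t : ℂ) * (z:ℂ) ^ 2)) with hf
  have hcontf : Continuous f := by apply Continuous.cexp; fun_prop
  have hint : ∀ x y : ℝ, IntervalIntegrable f volume x y := fun x y =>
    hcontf.intervalIntegrable x y
  set δ : ℝ := (Real.sqrt t)⁻¹ with hδdef
  have hδ : 0 < δ := inv_pos.mpr (Real.sqrt_pos.mpr ht)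
  have hleft : ∀ c d : ℝ, c ≤ d → d ≤ -δ → ‖∫ z in c..d, f z‖ ≤ δ := by
    intro c d hcd hd
    have hrefl : (∫ z in -d..-c, f (-z)) = ∫ z in c..d, f z := by
      rw [intervalIntegral.integral_comp_neg f]; simp
    have heq : ∀ z : ℝ, f (-z) = f z := by
      intro z; simp only [hf]; push_cast; ring_nf
    rw [← hrefl]
    rw [intervalIntegral.integral_congr (g := f) (fun z _ => heq z)]
    exact fresnel_right t ht (-d) (-c) (by linarith) (by linarith)
  have hright : ∀ c d : ℝ, δ ≤ c → c ≤ d → ‖∫ z in c..d, f z‖ ≤ δ := fun c d h1 h2 =>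
    fresnel_right t ht c d h1 h2
  have hmid : ∀ c d : ℝ, -δ ≤ c → c ≤ d → d ≤ δ → ‖∫ z in c..d, f z‖ ≤ 2 * δ := by
    intro c d h1 h2 h3
    have := intervalIntegral.norm_integral_le_of_norm_le_const (C := 1) (f := f) (a := c) (b := d)
      (fun x _ => le_of_eq (norm_exp_I_mul_t_sq' t x))
    calc ‖∫ z in c..d, f z‖ ≤ 1 * |d - c| := this
      _ ≤ 2 * δ := by rw [one_mul, _root_.abs_of_nonneg (by linarith)]; linarith
  have main : ∀ a b : ℝ, a ≤ b → ‖∫ z in a..b, f z‖ ≤ 4 * δ := by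
    intro a b hab
    have hsplit2 : ∀ p : ℝ, ‖∫ z in a..b, f z‖ ≤ ‖∫ z in a..p, f z‖ + ‖∫ z in p..b, f z‖ := by
      intro p
      rw [← intervalIntegral.integral_add_adjacent_intervals (hint a p) (hint p b)]
      exact norm_add_le _ _
    have hsplit3 : ∀ p q : ℝ, ‖∫ z in a..b, f z‖ ≤
        ‖∫ z in a..p, f z‖ + ‖∫ z in p..q, f z‖ + ‖∫ z in q..b, f z‖ := by
      intro p q
      calc ‖∫ z in a..b, f z‖ ≤ ‖∫ z in a..p, f z‖ + ‖∫ z in p..b, f z‖ := hsplit2 p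
        _ ≤ ‖∫ z in a..p, f z‖ + (‖∫ z in p..q, f z‖ + ‖∫ z in q..b, f z‖) := by
            gcongr
            rw [← intervalIntegral.integral_add_adjacent_intervals (hint p q) (hint q b)]
            exact norm_add_le _ _
        _ = _ := by ring
    rcases le_or_gt b (-δ) with h1 | h1
    · linarith [hleft a b hab h1]
    rcases le_or_gt δ a with h2 | h2
    · linarith [hright a b h2 hab]
    rcases le_or_gt a (-δ) with h3 | h3
    · rcases le_or_gt b δ with h4 | h4
      · have := hsplit2 (-δ)
        have u1 := hleft a (-δ) h3 le_rfl
        have u2 := hmid (-δ) b le_rfl h1.le h4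
        linarith
      · have := hsplit3 (-δ) δ
        have u1 := hleft a (-δ) h3 le_rfl
        have u2 := hmid (-δ) δ le_rfl (by linarith) le_rfl
        have u3 := hright δ b le_rfl h4.le
        linarith
    · rcases le_or_gt b δ with h4 | h4
      · have := hmid a b h3.le hab h4
        linarith
      · have := hsplit2 δ
        have u1 := hmid a δ h3.le h2.le le_rfl
        have u2 := hright δ b le_rfl h4.le
        linarith
  rcases le_total a b with h | h
  · exact main a b h
  · rw [intervalIntegral.integral_symm, norm_neg]
    exact main b a h


lemma fresnel_pos_r (t r : ℝ) (ht : 0 < t) (a b : ℝ) :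
    ‖∫ z in a..b, Complex.exp (Complex.I * ((t : ℂ) * (z:ℂ) ^ 2 + (z:ℂ) * (r:ℂ)))‖
      ≤ 4 * (Real.sqrt t)⁻¹ := by
  set s : ℝ := r / (2 * t) with hs
  have hkey : ∀ z : ℝ, Complex.exp (Complex.I * ((t : ℂ) * (z:ℂ) ^ 2 + (z:ℂ) * (r:ℂ)))
      = Complex.exp (Complex.I * ((-(r^2/(4*t)) : ℝ) : ℂ)) *
        Complex.exp (Complex.I * ((t : ℂ) * (((z + s : ℝ) : ℂ)) ^ 2)) := by
    intro z
    rw [← Complex.exp_add]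
    congr 1
    have htC : (t : ℂ) ≠ 0 := by exact_mod_cast ht.ne'
    have hcast : ((z + s : ℝ) : ℂ) = (z:ℂ) + (r:ℂ)/(2*(t:ℂ)) := by
      rw [hs]; push_cast; ring
    rw [hcast]
    push_cast
    field_simp
    ring
  calc ‖∫ z in a..b, Complex.exp (Complex.I * ((t : ℂ) * (z:ℂ) ^ 2 + (z:ℂ) * (r:ℂ)))‖
      = ‖∫ z in a..b, Complex.exp (Complex.I * ((-(r^2/(4*t)) : ℝ) : ℂ)) *
          Complex.exp (Complex.I * ((t : ℂ) * (((z + s : ℝ) : ℂ)) ^ 2))‖ := by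
        congr 1; exact intervalIntegral.integral_congr (fun z _ => hkey z)
    _ = ‖Complex.exp (Complex.I * ((-(r^2/(4*t)) : ℝ) : ℂ))‖ *
        ‖∫ z in a..b, Complex.exp (Complex.I * ((t : ℂ) * (((z + s : ℝ) : ℂ)) ^ 2))‖ := by
        rw [intervalIntegral.integral_const_mul, norm_mul]
    _ = ‖∫ z in a + s..b + s, Complex.exp (Complex.I * ((t : ℂ) * (z:ℂ) ^ 2))‖ := by
        rw [norm_exp_I_mul_real, one_mul,
          ← intervalIntegral.integral_comp_add_right (fun z : ℝ => Complex.exp (Complex.I * ((t : ℂ) * (z:ℂ) ^ 2))) s]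
    _ ≤ 4 * (Real.sqrt t)⁻¹ := fresnel_pos t ht _ _

lemma intervalIntegral_conj (f : ℝ → ℂ) (a b : ℝ) :
    ∫ z in a..b, (starRingEnd ℂ) (f z) = (starRingEnd ℂ) (∫ z in a..b, f z) := by
  rw [intervalIntegral, intervalIntegral, integral_conj, integral_conj, map_sub]

lemma fresnel_main (t r : ℝ) (ht : t ≠ 0) (a b : ℝ) :
    ‖∫ z in a..b, Complex.exp (Complex.I * ((t : ℂ) * (z:ℂ) ^ 2 + (z:ℂ) * (r:ℂ)))‖
      ≤ 4 * (Real.sqrt |t|)⁻¹ := by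
  rcases ht.lt_or_gt with hneg | hpos
  · have hconj : ∀ z : ℝ,
        Complex.exp (Complex.I * ((t : ℂ) * (z:ℂ) ^ 2 + (z:ℂ) * (r:ℂ)))
        = (starRingEnd ℂ) (Complex.exp (Complex.I * (((-t : ℝ) : ℂ) * (z:ℂ) ^ 2 + (z:ℂ) * ((-r : ℝ):ℂ)))) := by
      intro z
      rw [← Complex.exp_conj]
      congr 1
      simp only [map_mul, map_add, Complex.conj_I, Complex.conj_ofReal, map_pow]
      push_cast
      ring
    rw [intervalIntegral.integral_congr (fun z _ => hconj z), intervalIntegral_conj,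
      RCLike.norm_conj]
    have : |t| = -t := abs_of_neg hneg
    rw [this]
    exact fresnel_pos_r (-t) (-r) (by linarith) a b
  · rw [abs_of_pos hpos]
    exact fresnel_pos_r t r hpos a b


/-- Lemma 2.1, second bound: there is an absolute constant `C > 0` such that for every
`r ∈ ℝ`, every real `t` with `|t| > 0`, and every smooth compactly supported
`ψ : ℝ → ℂ` whose support does not contain `0`,
`|∫ e^{i(t z² + z r)} ψ(z) dz| ≤ C |t|^{-3/2} ‖∂_z²(ψ/z) + i r ∂_z(ψ/z)‖_{L¹}`. -/
theorem vanDerCorput_second_bound :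
    ∃ C : ℝ, 0 < C ∧
      ∀ (r t : ℝ), 0 < |t| →
        ∀ ψ : ℝ → ℂ, ContDiff ℝ (⊤ : ℕ∞) ψ → HasCompactSupport ψ → 0 ∉ tsupport ψ →
          ‖∫ z : ℝ, Complex.exp (Complex.I * ((t : ℂ) * (z : ℂ) ^ 2 + (z : ℂ) * (r : ℂ))) * ψ z‖
            ≤ C * |t| ^ (-(3 : ℝ) / 2) *
              ∫ z : ℝ, ‖deriv (deriv (fun w : ℝ => ψ w / (w : ℂ))) z
                + Complex.I * (r : ℂ) * deriv (fun w : ℝ => ψ w / (w : ℂ)) z‖ := by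
  refine ⟨2, by norm_num, ?_⟩
  intro r t ht ψ hψtop hψc h0
  have ht0 : t ≠ 0 := by
    intro h; rw [h] at ht; simp at ht
  set φ : ℝ → ℂ := fun w : ℝ => ψ w / (w : ℂ) with hφdef
  have hψ : ContDiff ℝ (⊤ : ℕ∞) ψ := hψtop.of_le (by simp)
  have hψ0 : ∀ᶠ w in nhds (0:ℝ), ψ w = 0 := notMem_tsupport_iff_eventuallyEq.mp h0
  -- φ is smooth
  have hφ : ContDiff ℝ (⊤ : ℕ∞) φ := by
    rw [contDiff_iff_contDiffAt]
    intro x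
    rcases eq_or_ne x 0 with rfl | hx
    · have hev : φ =ᶠ[nhds (0:ℝ)] (fun _ => (0:ℂ)) := by
        filter_upwards [hψ0] with w hw
        simp [hφdef, hw]
      exact (contDiffAt_const (c := (0:ℂ))).congr_of_eventuallyEq hev
    · have h2 : ContDiffAt ℝ (⊤ : ℕ∞) (fun w : ℝ => (w:ℂ)) x :=
        Complex.ofRealCLM.contDiff.contDiffAt
      have h3 : ContDiffAt ℝ (⊤ : ℕ∞) (fun w : ℝ => ((w:ℂ))⁻¹) x :=
        h2.inv (Complex.ofReal_ne_zero.mpr hx)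
      have h4 := hψ.contDiffAt.mul h3
      simp only [← div_eq_mul_inv] at h4
      exact h4
  have hφc : HasCompactSupport φ := by
    apply hψc.mono
    intro w hw
    simp only [Function.mem_support] at hw ⊢
    intro h; apply hw; simp [hφdef, h]
  have hψzero : ψ 0 = 0 := image_eq_zero_of_notMem_tsupport h0
  have hzφ : ∀ z : ℝ, (z:ℂ) * φ z = ψ z := by
    intro z
    rcases eq_or_ne z 0 with rfl | hz
    · simp [hψzero]
    · have : (z:ℂ) ≠ 0 := by exact_mod_cast hz
      simp [hφdef]
      rw [mul_div_cancel₀ _ this]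
  have hφdiff : Differentiable ℝ φ := hφ.differentiable (by simp)
  have hφ' : ContDiff ℝ (⊤ : ℕ∞) (deriv φ) := by
    have := contDiff_infty_iff_deriv.mp (by exact_mod_cast hφ)
    exact_mod_cast this.2
  have hφ'diff : Differentiable ℝ (deriv φ) := hφ'.differentiable (by simp)
  have hφ'' : Continuous (deriv (deriv φ)) := by
    have := contDiff_infty_iff_deriv.mp (by exact_mod_cast hφ')
    exact (this.2.continuous)
  -- notation
  set P : ℝ → ℂ := fun z => Complex.exp (Complex.I * ((t : ℂ) * (z:ℂ) ^ 2 + (z:ℂ) * (r:ℂ))) with hP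
  set E : ℝ → ℂ := fun z => Complex.exp (Complex.I * ((t : ℂ) * (z:ℂ) ^ 2)) with hE
  set Q : ℝ → ℂ := fun z => Complex.exp (Complex.I * ((r : ℂ) * (z:ℂ))) with hQ
  set g : ℝ → ℂ := fun z => deriv φ z + Complex.I * (r:ℂ) * φ z with hg
  set g' : ℝ → ℂ := fun z => deriv (deriv φ) z + Complex.I * (r:ℂ) * deriv φ z with hg'
  have hEQ : ∀ z : ℝ, E z * Q z = P z := by
    intro z
    rw [hE, hQ, hP, ← Complex.exp_add]
    congr 1; ring
  have hPcont : Continuous P := by apply Continuous.cexp; fun_prop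
  have hEd : ∀ z : ℝ, HasDerivAt E (2 * Complex.I * t * z * E z) z := by
    intro z
    have h1 : HasDerivAt (fun w : ℂ => Complex.I * ((t:ℂ) * w ^ 2))
        (Complex.I * ((t:ℂ) * (2 * (z:ℂ)))) (z:ℂ) := by
      simpa [mul_assoc, mul_comm, mul_left_comm] using
        (((hasDerivAt_pow 2 (z:ℂ)).const_mul (t:ℂ)).const_mul Complex.I)
    have := (h1.cexp).comp_ofReal
    convert this using 1
    ring
  have hQd : ∀ z : ℝ, HasDerivAt Q (Complex.I * r * Q z) z := by
    intro z
    have h1 : HasDerivAt (fun w : ℂ => Complex.I * ((r:ℂ) * w))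
        (Complex.I * (r:ℂ)) (z:ℂ) := by
      simpa [mul_assoc] using ((hasDerivAt_id (z:ℂ)).const_mul ((r:ℂ))).const_mul Complex.I
    have := (h1.cexp).comp_ofReal
    convert this using 1
    ring
  have hgd : ∀ z : ℝ, HasDerivAt g (g' z) z := by
    intro z
    exact ((hφ'diff z).hasDerivAt).add (((hφdiff z).hasDerivAt).const_mul (Complex.I * (r:ℂ)))
  have hgcont : Continuous g := by
    exact (hφ'.continuous).add (continuous_const.mul (hφ.continuous))
  have hg'cont : Continuous g' := by
    exact hφ''.add (continuous_const.mul (hφ'.continuous))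
  have hgc : HasCompactSupport g := by
    exact (hφc.deriv).add (hφc.mul_left)
  have hg'c : HasCompactSupport g' := by
    exact (hφc.deriv.deriv).add (hφc.deriv.mul_left)
  -- first integration by parts
  have huvd : ∀ z : ℝ, HasDerivAt (fun z => E z * (Q z * φ z))
      ((2 * Complex.I * t * P z) * ψ z + P z * g z) z := by
    intro z
    have := (hEd z).mul ((hQd z).mul ((hφdiff z).hasDerivAt))
    refine this.congr_deriv ?_
    simp only [Pi.mul_apply]
    rw [← hEQ z, ← hzφ z]
    simp only [hg]
    ring
  have hint1 : Integrable (fun z : ℝ => P z * ψ z) := by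
    apply Continuous.integrable_of_hasCompactSupport
    · exact hPcont.mul (hψ.continuous)
    · exact hψc.mul_left
  have hint2 : Integrable (fun z : ℝ => P z * g z) := by
    apply Continuous.integrable_of_hasCompactSupport
    · exact hPcont.mul hgcont
    · exact hgc.mul_left
  have huvint : Integrable (fun z : ℝ => E z * (Q z * φ z)) := by
    apply Continuous.integrable_of_hasCompactSupport
    · apply Continuous.mul
      · apply Continuous.cexp; fun_prop
      · apply Continuous.mul
        · apply Continuous.cexp; fun_prop
        · exact hφ.continuous
    · exact (hφc.mul_left).mul_left
  have hDint : Integrable (fun z : ℝ => (2 * Complex.I * t * P z) * ψ z + P z * g z) := by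
    have h1 : Integrable (fun z : ℝ => (2 * Complex.I * t) * (P z * ψ z)) := hint1.const_mul _
    apply (h1.add hint2).congr
    filter_upwards with z
    simp only [Pi.add_apply]
    ring
  have hzero1 : ∫ z : ℝ, ((2 * Complex.I * t * P z) * ψ z + P z * g z) = 0 :=
    integral_eq_zero_of_hasDerivAt_of_integrable huvd hDint huvint
  have hIBP1 : (2 * Complex.I * t) * ∫ z : ℝ, P z * ψ z = - ∫ z : ℝ, P z * g z := by
    have e1 : ∫ z : ℝ, ((2 * Complex.I * t * P z) * ψ z + P z * g z)
        = (∫ z : ℝ, (2 * Complex.I * t) * (P z * ψ z)) + ∫ z : ℝ, P z * g z := by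
      rw [← integral_add (hint1.const_mul _) hint2]
      congr 1; funext z; ring
    rw [e1, MeasureTheory.integral_const_mul] at hzero1
    linear_combination hzero1
  -- second integration by parts
  set A : ℝ → ℂ := fun x => ∫ z in (0:ℝ)..x, P z with hA
  have hAd : ∀ x : ℝ, HasDerivAt A (P x) x := by
    intro x
    exact intervalIntegral.integral_hasDerivAt_right (hPcont.intervalIntegrable 0 x)
      (hPcont.aestronglyMeasurable.stronglyMeasurableAtFilter) (hPcont.continuousAt)
  have hAb : ∀ x : ℝ, ‖A x‖ ≤ 4 * (Real.sqrt |t|)⁻¹ := fun x => fresnel_main t r ht0 0 x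
  have hAcont : Continuous A := by
    apply continuous_iff_continuousAt.mpr
    intro x; exact (hAd x).continuousAt
  have hAgd : ∀ z : ℝ, HasDerivAt (fun z => A z * g z) (P z * g z + A z * g' z) z :=
    fun z => (hAd z).mul (hgd z)
  have hint3 : Integrable (fun z : ℝ => A z * g' z) := by
    apply Continuous.integrable_of_hasCompactSupport
    · exact hAcont.mul hg'cont
    · exact hg'c.mul_left
  have hAgint : Integrable (fun z : ℝ => A z * g z) := by
    apply Continuous.integrable_of_hasCompactSupport
    · exact hAcont.mul hgcont
    · exact hgc.mul_left
  have hzero2 : ∫ z : ℝ, (P z * g z + A z * g' z) = 0 :=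
    integral_eq_zero_of_hasDerivAt_of_integrable hAgd (hint2.add hint3) hAgint
  have hIBP2 : ∫ z : ℝ, P z * g z = - ∫ z : ℝ, A z * g' z := by
    rw [integral_add hint2 hint3] at hzero2
    linear_combination hzero2
  -- bound
  have hg'norm : Integrable (fun z : ℝ => ‖g' z‖) := by
    apply Continuous.integrable_of_hasCompactSupport
    · exact hg'cont.norm
    · exact hg'c.norm
  have hbound2 : ‖∫ z : ℝ, P z * g z‖ ≤ 4 * (Real.sqrt |t|)⁻¹ * ∫ z : ℝ, ‖g' z‖ := by
    rw [hIBP2, norm_neg]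
    calc ‖∫ z : ℝ, A z * g' z‖ ≤ ∫ z : ℝ, ‖A z * g' z‖ := norm_integral_le_integral_norm _
      _ ≤ ∫ z : ℝ, 4 * (Real.sqrt |t|)⁻¹ * ‖g' z‖ := by
          apply integral_mono_of_nonneg
          · filter_upwards with z; positivity
          · exact hg'norm.const_mul _
          · filter_upwards with z
            rw [norm_mul]
            gcongr
            exact hAb z
      _ = 4 * (Real.sqrt |t|)⁻¹ * ∫ z : ℝ, ‖g' z‖ := MeasureTheory.integral_const_mul _ _
  have hLHS : ‖∫ z : ℝ, P z * ψ z‖ = (2 * |t|)⁻¹ * ‖∫ z : ℝ, P z * g z‖ := by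
    have h2t : (2 * Complex.I * (t:ℂ)) ≠ 0 := by
      simp [Complex.I_ne_zero]
      exact_mod_cast ht0
    have : ∫ z : ℝ, P z * ψ z = (2 * Complex.I * t)⁻¹ * (- ∫ z : ℝ, P z * g z) := by
      rw [← hIBP1]
      field_simp
      rw [mul_div_assoc, div_self (by exact_mod_cast ht0 : (t:ℂ) ≠ 0), mul_one]
    rw [this, norm_mul, norm_neg, norm_inv]
    congr 2
    simp [norm_mul, Complex.norm_real]
  -- arithmetic
  have hsqrt : (Real.sqrt |t|)⁻¹ = |t| ^ (-(1:ℝ)/2) := by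
    rw [Real.sqrt_eq_rpow, ← Real.rpow_neg (abs_nonneg t)]
    norm_num
  have harith : (2 * |t|)⁻¹ * (4 * (Real.sqrt |t|)⁻¹) = 2 * |t| ^ (-(3:ℝ)/2) := by
    rw [hsqrt]
    rw [mul_inv, show ((-(3:ℝ))/2) = (-1) + (-(1:ℝ)/2) by norm_num, Real.rpow_add ht,
      Real.rpow_neg_one]
    ring
  calc ‖∫ z : ℝ, P z * ψ z‖ = (2 * |t|)⁻¹ * ‖∫ z : ℝ, P z * g z‖ := hLHS
    _ ≤ (2 * |t|)⁻¹ * (4 * (Real.sqrt |t|)⁻¹ * ∫ z : ℝ, ‖g' z‖) := by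
        have : (0:ℝ) ≤ (2 * |t|)⁻¹ := by positivity
        exact mul_le_mul_of_nonneg_left hbound2 this
    _ = 2 * |t| ^ (-(3:ℝ)/2) * ∫ z : ℝ, ‖g' z‖ := by rw [← mul_assoc, harith]
end

section
/- Let χ : ℝ → ℝ be a smooth, non-negative, even function with χ(z) = 1 for z ∈ [-1,1] and χ(z) = 0 for |z| ≥ 2, and for L ≥ 1 set ψ_L(z) := (1 − χ(z²)) χ(z/L). Then sup_{L ≥ 1} ∫_ℝ | F[ψ_L](ξ) | dξ < ∞, where F[f](ξ) = (2π)^{-1/2} ∫_ℝ e^{-i x ξ} f(x) dx denotes the Fourier transform. -/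
open MeasureTheory Real Complex
open scoped FourierTransform Convolution

noncomputable def csSchwartz (f : ℝ → ℂ) (h1 : ContDiff ℝ (⊤ : ℕ∞) f) (h2 : HasCompactSupport f) :
    SchwartzMap ℝ ℂ where
  toFun := f
  smooth' := h1.of_le (by simp)
  decay' := by
    intro k n
    have hc : Continuous fun x : ℝ => ‖x‖ ^ k * ‖iteratedFDeriv ℝ n f x‖ :=
      (continuous_norm.pow k).mul (h1.continuous_iteratedFDeriv (by exact_mod_cast le_top)).norm
    have hs : HasCompactSupport fun x : ℝ => ‖x‖ ^ k * ‖iteratedFDeriv ℝ n f x‖ :=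
      ((h2.iteratedFDeriv n).norm).mul_left
    obtain ⟨C, hC⟩ := hc.bounded_above_of_compact_support hs
    exact ⟨C, fun x => le_trans (le_abs_self _) (by simpa [_root_.abs_of_nonneg (mul_nonneg (pow_nonneg (abs_nonneg x) k) (norm_nonneg _))] using hC x)⟩

lemma csSchwartz_coe (f : ℝ → ℂ) (h1 : ContDiff ℝ (⊤ : ℕ∞) f) (h2 : HasCompactSupport f) :
    ⇑(SchwartzMap.fourierTransformCLM ℂ (csSchwartz f h1 h2)) = 𝓕 f :=
  rfl

lemma csSchwartz_integrable_fourier (f : ℝ → ℂ) (h1 : ContDiff ℝ (⊤ : ℕ∞) f) (h2 : HasCompactSupport f) :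
    Integrable (𝓕 f) volume := by
  have := (SchwartzMap.fourierTransformCLM ℂ (csSchwartz f h1 h2)).integrable (μ := volume)
  rwa [csSchwartz_coe] at this

lemma csSchwartz_cont_fourier (f : ℝ → ℂ) (h1 : ContDiff ℝ (⊤ : ℕ∞) f) (h2 : HasCompactSupport f) :
    Continuous (𝓕 f) := by
  have := (SchwartzMap.fourierTransformCLM ℂ (csSchwartz f h1 h2)).continuous
  rwa [csSchwartz_coe] at this

lemma csSchwartz_integrable_norm_fourier (f : ℝ → ℂ) (h1 : ContDiff ℝ (⊤ : ℕ∞) f)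
    (h2 : HasCompactSupport f) : Integrable (fun w => ‖𝓕 f w‖) volume :=
  (csSchwartz_integrable_fourier f h1 h2).norm

lemma char_combine (x ξ η : ℝ) (a b : ℂ) :
    𝐞 (-(x*ξ)) • (a * (𝐞 (η*x) • b)) = b * (𝐞 (-(x*(ξ-η))) • a) := by
  have h : (𝐞 (-(x*(ξ-η))) : Circle) = 𝐞 (-(x*ξ)) * 𝐞 (η*x) := by
    rw [← AddChar.map_add_eq_mul]; congr 1; ring
  simp only [Circle.smul_def, smul_eq_mul, h, Circle.coe_mul]
  ring

lemma fourier_scale (g : ℝ → ℂ) (L : ℝ) (hL : 0 < L) (w : ℝ) :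
    𝓕 (fun x => g (x / L)) w = L • 𝓕 g (L * w) := by
  rw [Real.fourier_real_eq, Real.fourier_real_eq]
  have h : ∀ v : ℝ, 𝐞 (-(v * w)) • g (v / L) = (fun u => 𝐞 (-(u * (L * w))) • g u) (v / L) := by
    intro v
    have : -(v * w) = -(v / L * (L * w)) := by field_simp
    simp only [this]
  simp_rw [h]
  rw [MeasureTheory.Measure.integral_comp_div (fun u => 𝐞 (-(u * (L * w))) • g u) L,
    abs_of_pos hL]

lemma integral_norm_fourier_scale (g : ℝ → ℂ) (L : ℝ) (hL : 0 < L) :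
    ∫ w, ‖𝓕 (fun x => g (x / L)) w‖ = ∫ w, ‖𝓕 g w‖ := by
  have h : ∀ w : ℝ, ‖𝓕 (fun x => g (x / L)) w‖ = L * ‖𝓕 g (L * w)‖ := by
    intro w
    rw [fourier_scale g L hL, norm_smul, Real.norm_eq_abs, abs_of_pos hL]
  simp_rw [h]
  rw [MeasureTheory.integral_const_mul,
    MeasureTheory.Measure.integral_comp_mul_left (fun u => ‖𝓕 g u‖) L, abs_inv,
    abs_of_pos hL, smul_eq_mul]
  field_simp

lemma inv_formula (h : ℝ → ℂ) (hh_cont : Continuous h) (hh_int : Integrable h)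
    (hFh_int : Integrable (𝓕 h)) (x : ℝ) :
    h x = ∫ η, 𝐞 (η * x) • 𝓕 h η := by
  conv_lhs => rw [← hh_cont.fourierInv_fourier_eq hh_int hFh_int]
  rw [Real.fourierInv_eq]
  simp only [Real.inner_apply]

lemma fourier_mul_eq_conv (q h : ℝ → ℂ)
    (hq_int : Integrable q) (hq_cont : Continuous q)
    (hh_int : Integrable h) (hh_cont : Continuous h)
    (hFh_int : Integrable (𝓕 h)) (hFh_cont : Continuous (𝓕 h)) (ξ : ℝ) :
    𝓕 (fun x => q x * h x) ξ = ∫ η, 𝓕 h η * 𝓕 q (ξ - η) := by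
  have hP : Integrable (Function.uncurry fun x η =>
      𝐞 (-(x*ξ)) • (q x * (𝐞 (η*x) • 𝓕 h η))) (volume.prod volume) := by
    have hbase : Integrable (fun p : ℝ × ℝ => ‖q p.1‖ * ‖𝓕 h p.2‖)
        (volume.prod volume) := (hq_int.norm).mul_prod (hFh_int.norm)
    refine hbase.mono' ?_ ?_
    · apply Continuous.aestronglyMeasurable
      apply Continuous.smul
      · exact continuous_subtype_val.comp (Real.continuous_fourierChar.comp (f := fun p : ℝ × ℝ => -(p.1 * ξ)) (by fun_prop))
      · exact ((hq_cont.comp continuous_fst).mul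
          ((Real.continuous_fourierChar.comp (by fun_prop)).smul
            (hFh_cont.comp continuous_snd)))
    · refine Filter.Eventually.of_forall fun p => ?_
      simp [Function.uncurry, Circle.norm_smul, norm_mul]
  calc 𝓕 (fun x => q x * h x) ξ
      = ∫ x, 𝐞 (-(x*ξ)) • (q x * h x) := Real.fourier_real_eq _ _
    _ = ∫ x, ∫ η, 𝐞 (-(x*ξ)) • (q x * (𝐞 (η*x) • 𝓕 h η)) := by
        congr 1; funext x
        conv_lhs => rw [inv_formula h hh_cont hh_int hFh_int x]
        simp only [Circle.smul_def, smul_eq_mul]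
        rw [← MeasureTheory.integral_const_mul, ← MeasureTheory.integral_const_mul]
    _ = ∫ η, ∫ x, 𝐞 (-(x*ξ)) • (q x * (𝐞 (η*x) • 𝓕 h η)) := integral_integral_swap hP
    _ = ∫ η, ∫ x, 𝓕 h η * (𝐞 (-(x*(ξ-η))) • q x) := by simp_rw [char_combine]
    _ = ∫ η, 𝓕 h η * ∫ x, 𝐞 (-(x*(ξ-η))) • q x := by simp_rw [MeasureTheory.integral_const_mul]
    _ = ∫ η, 𝓕 h η * 𝓕 q (ξ - η) := by simp only [Real.fourier_real_eq q]

/-- Uniform `L¹` bound on the Fourier transforms of the truncated high-energy cutoffs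
`ψ_L(z) = (1 − χ(z²)) χ(z/L)` (intermediate claim in Proposition 2.3):
`sup_{L ≥ 1} ∫ |F[ψ_L](ξ)| dξ < ∞`, with
`F[f](ξ) = (2π)^{-1/2} ∫ e^{-i x ξ} f(x) dx`. -/
theorem uniform_L1_fourier_bound_truncated_cutoffs
    (χ : ℝ → ℝ) (hχ : ContDiff ℝ (⊤ : ℕ∞) χ) (hχ_nonneg : ∀ z, 0 ≤ χ z)
    (hχ_even : ∀ z, χ (-z) = χ z)
    (hχ_one : ∀ z ∈ Set.Icc (-1 : ℝ) 1, χ z = 1)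
    (hχ_zero : ∀ z : ℝ, 2 ≤ |z| → χ z = 0) :
    ∃ C : ℝ, ∀ (L : ℝ), 1 ≤ L →
      (∫ ξ : ℝ, ‖(((2 * π : ℝ) ^ (-(1 : ℝ) / 2) : ℝ) : ℂ)
          * ∫ x : ℝ, Complex.exp (-(Complex.I) * (x : ℂ) * (ξ : ℂ))
              * (((1 - χ (x ^ 2)) * χ (x / L) : ℝ) : ℂ)‖) ≤ C := by
  have hπ : (0:ℝ) < 2 * π := by positivity
  -- complex-valued versions of the cutoffs
  set g0 : ℝ → ℂ := fun x => (χ x : ℂ) with hg0def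
  have hg0smooth : ContDiff ℝ (⊤ : ℕ∞) g0 := Complex.ofRealCLM.contDiff.comp hχ
  have hg0supp : HasCompactSupport g0 := by
    apply HasCompactSupport.intro (isCompact_Icc (a := (-2:ℝ)) (b := 2))
    intro x hx
    have h2 : 2 ≤ |x| := by
      simp only [Set.mem_Icc, not_and_or, not_le] at hx
      rcases hx with h | h
      · rw [abs_of_neg (by linarith)]; linarith
      · rw [abs_of_pos (by linarith)]; linarith
    simp [hg0def, hχ_zero x h2]
  set q : ℝ → ℂ := fun x => (χ (x^2) : ℂ) with hqdef
  have hqsmooth : ContDiff ℝ (⊤ : ℕ∞) q :=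
    Complex.ofRealCLM.contDiff.comp (hχ.comp (contDiff_id.pow 2))
  have hqsupp : HasCompactSupport q := by
    apply HasCompactSupport.intro (isCompact_Icc (a := (-2:ℝ)) (b := 2))
    intro x hx
    have h2 : (2:ℝ) ≤ |x^2| := by
      simp only [Set.mem_Icc, not_and_or, not_le] at hx
      rw [_root_.abs_of_nonneg (sq_nonneg x)]
      rcases hx with h | h <;> nlinarith
    simp [hqdef, hχ_zero _ h2]
  have hqint : Integrable q := hqsmooth.continuous.integrable_of_hasCompactSupport hqsupp
  have hFqint : Integrable (𝓕 q) := csSchwartz_integrable_fourier q hqsmooth hqsupp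
  set A : ℝ := ∫ w : ℝ, ‖𝓕 g0 w‖ with hAdef
  set B : ℝ := ∫ w : ℝ, ‖𝓕 q w‖ with hBdef
  have hA0 : 0 ≤ A := integral_nonneg fun w => norm_nonneg _
  have hB0 : 0 ≤ B := integral_nonneg fun w => norm_nonneg _
  set c : ℝ := (2 * π) ^ (-(1:ℝ)/2) with hcdef
  have hc0 : 0 < c := Real.rpow_pos_of_pos hπ _
  refine ⟨2 * π * c * (A + A * B), ?_⟩
  intro L hL1
  have hL0 : 0 < L := lt_of_lt_of_le one_pos hL1
  set h : ℝ → ℂ := fun x => (χ (x / L) : ℂ) with hhdef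
  have hhsmooth : ContDiff ℝ (⊤ : ℕ∞) h :=
    Complex.ofRealCLM.contDiff.comp (hχ.comp (contDiff_id.div_const L))
  have hhsupp : HasCompactSupport h := by
    apply HasCompactSupport.intro (isCompact_Icc (a := (-(2*L):ℝ)) (b := 2*L))
    intro x hx
    have h2 : (2:ℝ) ≤ |x / L| := by
      have hgt : 2 * L < |x| := by
        simp only [Set.mem_Icc, not_and_or, not_le] at hx
        rcases hx with hlt | hlt
        · rw [abs_of_neg (by nlinarith)]; linarith
        · rw [abs_of_pos (by nlinarith)]; linarith
      rw [abs_div, abs_of_pos hL0, le_div_iff₀ hL0]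
      linarith
    simp [hhdef, hχ_zero _ h2]
  have hhint : Integrable h := hhsmooth.continuous.integrable_of_hasCompactSupport hhsupp
  have hFhint : Integrable (𝓕 h) := csSchwartz_integrable_fourier h hhsmooth hhsupp
  have hFhcont : Continuous (𝓕 h) := csSchwartz_cont_fourier h hhsmooth hhsupp
  set F : ℝ → ℂ := fun x => q x * h x with hFdef
  have hFsmooth : ContDiff ℝ (⊤ : ℕ∞) F := hqsmooth.mul hhsmooth
  have hFsupp : HasCompactSupport F := hhsupp.mul_left
  have hFint : Integrable F := hFsmooth.continuous.integrable_of_hasCompactSupport hFsupp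
  have hFFint : Integrable (𝓕 F) := csSchwartz_integrable_fourier F hFsmooth hFsupp
  set ψ : ℝ → ℂ := fun x => (((1 - χ (x ^ 2)) * χ (x / L) : ℝ) : ℂ) with hψdef
  have hψeq : ψ = fun x => h x - F x := by
    funext x; simp only [hψdef, hFdef, hqdef, hhdef]; push_cast; ring
  have hψsmooth : ContDiff ℝ (⊤ : ℕ∞) ψ := by rw [hψeq]; exact hhsmooth.sub hFsmooth
  have hψsupp : HasCompactSupport ψ := by
    rw [hψeq]
    have : (fun x => h x - F x) = fun x => h x + -F x := by funext x; ring
    rw [this]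
    exact hhsupp.add (HasCompactSupport.neg hFsupp)
  have hFψint : Integrable (𝓕 ψ) := csSchwartz_integrable_fourier ψ hψsmooth hψsupp
  -- Step A : the inner integral is the Fourier transform
  have hinner : ∀ ξ : ℝ,
      (∫ x : ℝ, Complex.exp (-(Complex.I) * (x : ℂ) * (ξ : ℂ)) * ψ x) = 𝓕 ψ (ξ / (2*π)) := by
    intro ξ
    rw [Real.fourier_real_eq_integral_exp_smul]
    congr 1; funext v
    rw [smul_eq_mul]
    congr 2
    have hπc : (π:ℂ) ≠ 0 := Complex.ofReal_ne_zero.2 Real.pi_ne_zero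
    push_cast
    field_simp
  -- Step B : split the Fourier transform
  have hsplit : 𝓕 ψ = fun w => 𝓕 h w - 𝓕 F w := by
    funext w
    have e1 : 𝓕 ψ w = ∫ v, (𝐞 (-(v*w)) • h v - 𝐞 (-(v*w)) • F v) := by
      rw [Real.fourier_real_eq]
      congr 1; funext v
      rw [hψeq, ← smul_sub]
    have ih : Integrable (fun v : ℝ => 𝐞 (-(v * w)) • h v) :=
      by simpa [Real.inner_apply, mul_comm] using (Real.fourierIntegral_convergent_iff w).2 hhint
    have iF : Integrable (fun v : ℝ => 𝐞 (-(v * w)) • F v) :=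
      by simpa [Real.inner_apply, mul_comm] using (Real.fourierIntegral_convergent_iff w).2 hFint
    rw [e1, integral_sub ih iF]
    rw [Real.fourier_real_eq h, Real.fourier_real_eq F]
  -- Step C : scaling identity
  have hC : ∫ w : ℝ, ‖𝓕 h w‖ = A := by
    have : h = fun x => g0 (x / L) := rfl
    rw [this, integral_norm_fourier_scale g0 L hL0]
  -- Step D : convolution bound
  have hDpt : ∀ ξ : ℝ, 𝓕 F ξ = ∫ η, 𝓕 h η * 𝓕 q (ξ - η) := fun ξ =>
    fourier_mul_eq_conv q h hqint hqsmooth.continuous hhint hhsmooth.continuous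
      hFhint hFhcont ξ
  set u : ℝ → ℝ := fun w => ‖𝓕 h w‖ with hudef
  set v : ℝ → ℝ := fun w => ‖𝓕 q w‖ with hvdef
  have hu : Integrable u := hFhint.norm
  have hv : Integrable v := hFqint.norm
  have hconv_int : Integrable (u ⋆[ContinuousLinearMap.mul ℝ ℝ, volume] v) :=
    hu.integrable_convolution (ContinuousLinearMap.mul ℝ ℝ) hv
  have hDbd : ∀ ξ : ℝ, ‖𝓕 F ξ‖ ≤ (u ⋆[ContinuousLinearMap.mul ℝ ℝ, volume] v) ξ := by
    intro ξ
    rw [hDpt ξ, convolution_def]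
    refine (norm_integral_le_integral_norm _).trans_eq ?_
    congr 1; funext η
    simp [hudef, hvdef, norm_mul]
  have hD : ∫ ξ : ℝ, ‖𝓕 F ξ‖ ≤ A * B := by
    have h1 : ∫ ξ : ℝ, ‖𝓕 F ξ‖ ≤ ∫ ξ, (u ⋆[ContinuousLinearMap.mul ℝ ℝ, volume] v) ξ :=
      integral_mono hFFint.norm hconv_int hDbd
    have h2 : ∫ ξ, (u ⋆[ContinuousLinearMap.mul ℝ ℝ, volume] v) ξ = (∫ w, u w) * ∫ w, v w := by
      rw [integral_convolution]
      · simp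
      · exact hu
      · exact hv
    rw [h2] at h1
    calc ∫ ξ : ℝ, ‖𝓕 F ξ‖ ≤ (∫ w, u w) * ∫ w, v w := h1
      _ = A * B := by rw [hudef] at hC; rw [hC]
  -- combine
  have hS : ∫ w : ℝ, ‖𝓕 ψ w‖ ≤ A + A * B := by
    have hbd : ∀ w : ℝ, ‖𝓕 ψ w‖ ≤ ‖𝓕 h w‖ + ‖𝓕 F w‖ := by
      intro w; rw [hsplit]; exact norm_sub_le _ _
    calc ∫ w : ℝ, ‖𝓕 ψ w‖ ≤ ∫ w : ℝ, (‖𝓕 h w‖ + ‖𝓕 F w‖) :=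
          integral_mono hFψint.norm (hFhint.norm.add hFFint.norm) hbd
      _ = (∫ w : ℝ, ‖𝓕 h w‖) + ∫ w : ℝ, ‖𝓕 F w‖ := integral_add hFhint.norm hFFint.norm
      _ ≤ A + A * B := by rw [hC]; linarith [hD]
  -- final computation
  calc ∫ ξ : ℝ, ‖((c : ℝ) : ℂ) * ∫ x : ℝ, Complex.exp (-(Complex.I) * (x : ℂ) * (ξ : ℂ)) * ψ x‖
      = ∫ ξ : ℝ, (fun w : ℝ => ‖((c : ℝ) : ℂ) * 𝓕 ψ w‖) (ξ / (2*π)) := by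
        congr 1; funext ξ; rw [hinner ξ]
    _ = |2*π| • ∫ w : ℝ, ‖((c : ℝ) : ℂ) * 𝓕 ψ w‖ :=
        MeasureTheory.Measure.integral_comp_div (fun w : ℝ => ‖((c : ℝ) : ℂ) * 𝓕 ψ w‖) (2*π)
    _ = (2*π) * (c * ∫ w : ℝ, ‖𝓕 ψ w‖) := by
        rw [abs_of_pos hπ, smul_eq_mul]
        congr 1
        simp_rw [norm_mul, Complex.norm_real, Real.norm_eq_abs, abs_of_pos hc0]
        exact MeasureTheory.integral_const_mul c _
    _ ≤ 2 * π * c * (A + A * B) := by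
        have h' : 2 * π * (c * ∫ w : ℝ, ‖𝓕 ψ w‖) = (2 * π * c) * ∫ w : ℝ, ‖𝓕 ψ w‖ := by ring
        rw [h']
        exact mul_le_mul_of_nonneg_left hS (by positivity)
end

section
/- For z ∈ ℝ∖{0} and r ≥ 0 define r₁(z,r) := (i e^{i z r})/(2z) − i/(2z) + r/2 − (r²/(4i)) z. Then there exists an absolute constant C > 0 such that for all z with 0 < |z| < 1, all r ≥ 0, and all k ∈ {0,1,2}, |z|^k | ∂_z^k r₁(z,r) | ≤ C |z|² ⟨r⟩^{3+k}. -/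
/-!
With `E₃(t) = e^{it} - 1 - it - (it)²/2` one has `r₁(z, r) = (i/2) E₃(zr)/z`. The Taylor
remainders `Eₙ` of `t ↦ e^{it}` satisfy `Eₙ₊₁' = i Eₙ`, so the mean value inequality gives
`|Eₙ(t)| ≤ |t|ⁿ` by induction. The derivative of `Eₙ₊₁(wr)/wᵐ` is
`i r Eₙ(wr)/wᵐ - m Eₙ₊₁(wr)/wᵐ⁺¹`: again functions of the same kind, each bounded by
`|r|ⁿ⁺¹ |w|ⁿ⁻ᵐ`, one power of `|w|` less than `Eₙ₊₁(wr)/wᵐ` itself. Induction on `k` then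
gives `|w|ᵏ |∂ᵏ r₁(w, r)| ≤ Cₖ |w|² |r|³`, and `|r| ≤ ⟨r⟩`.
-/

open Complex Filter Topology

noncomputable def expTaylorRemainder : ℕ → ℝ → ℂ
  | 0, t => exp (I * t)
  | n + 1, t => expTaylorRemainder n t - (I * t) ^ n / n.factorial

lemma expTaylorRemainder_succ_zero (n : ℕ) : expTaylorRemainder (n + 1) 0 = 0 := by
  induction n with
  | zero => simp [expTaylorRemainder]
  | succ n ih => simpa [expTaylorRemainder] using ih

lemma contDiff_expTaylorRemainder {N : WithTop ℕ∞} (n : ℕ) :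
    ContDiff ℝ N (expTaylorRemainder n) := by
  have hofReal : ContDiff ℝ N (fun t : ℝ => (t : ℂ)) := ofRealCLM.contDiff
  induction n with
  | zero => change ContDiff ℝ N (fun t : ℝ => exp (I * t)); fun_prop
  | succ n ih =>
    change ContDiff ℝ N (fun t => expTaylorRemainder n t - (I * t) ^ n / n.factorial)
    fun_prop

lemma hasDerivAt_expTaylorRemainder_succ (n : ℕ) (t : ℝ) :
    HasDerivAt (expTaylorRemainder (n + 1)) (I * expTaylorRemainder n t) t := by
  induction n with
  | zero =>
    have := ((hasDerivAt_id (t : ℂ)).const_mul I).cexp.comp_ofReal.sub_const 1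
    simpa [expTaylorRemainder, mul_comm _ I] using this
  | succ n ih =>
    have hpow : HasDerivAt (fun x : ℝ => (I * x) ^ (n + 1) / (n + 1).factorial)
        (I * ((I * t) ^ n / n.factorial)) t := by
      refine ((((hasDerivAt_id t).ofReal_comp).const_mul I).fun_pow (n + 1)).div_const
        ((n + 1).factorial : ℂ) |>.congr_deriv ?_
      simp only [id, Nat.add_sub_cancel, Nat.factorial_succ, ofReal_one]
      push_cast
      field_simp
    have := ih.sub hpow
    rwa [← mul_sub] at this

lemma norm_expTaylorRemainder_le (n : ℕ) (t : ℝ) : ‖expTaylorRemainder n t‖ ≤ |t| ^ n := by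
  induction n generalizing t with
  | zero => simp [expTaylorRemainder, norm_exp_I_mul_ofReal]
  | succ n ih =>
    have ht : t ∈ Metric.closedBall (0 : ℝ) |t| := by simp
    have hmvt := (convex_closedBall 0 |t|).norm_image_sub_le_of_norm_hasDerivWithin_le
      (C := |t| ^ n) (fun x _ => (hasDerivAt_expTaylorRemainder_succ n x).hasDerivWithinAt)
      (fun x hx => ?_) (Metric.mem_closedBall_self (abs_nonneg t)) ht
    · simpa [expTaylorRemainder_succ_zero, pow_succ] using hmvt
    · rw [norm_mul, norm_I, one_mul]
      exact (ih x).trans (pow_le_pow_left₀ (abs_nonneg x) (by simpa using hx) n)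

noncomputable def expRemainderDivPow (n m : ℕ) (r w : ℝ) : ℂ :=
  expTaylorRemainder n (w * r) / (w : ℂ) ^ m

section expRemainderDivPow

variable (n m : ℕ) (r : ℝ) {w : ℝ}

lemma hasDerivAt_expRemainderDivPow_succ (hw : w ≠ 0) :
    HasDerivAt (expRemainderDivPow (n + 1) m r)
      (I * r * expRemainderDivPow n m r w - m * expRemainderDivPow (n + 1) (m + 1) r w) w := by
  have hw' : (w : ℂ) ≠ 0 := ofReal_ne_zero.mpr hw
  have hnum := (hasDerivAt_expTaylorRemainder_succ n (w * r)).scomp w (hasDerivAt_mul_const r)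
  have hden := ((hasDerivAt_id w).ofReal_comp).fun_pow m
  refine (hnum.div hden (pow_ne_zero m hw')).congr_deriv ?_
  simp only [expRemainderDivPow, id, Function.comp_apply, real_smul, ofReal_one, mul_one]
  rcases m with _ | m
  · simp only [pow_zero, mul_one, CharP.cast_eq_zero, mul_zero, sub_zero, div_one, zero_mul]
    ring
  · field_simp
    simp only [Nat.add_sub_cancel]
    push_cast
    ring

lemma contDiffAt_expRemainderDivPow {N : WithTop ℕ∞} (hw : w ≠ 0) :
    ContDiffAt ℝ N (expRemainderDivPow n m r) w := by
  have hofReal : ContDiff ℝ N (fun t : ℝ => (t : ℂ)) := ofRealCLM.contDiff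
  change ContDiffAt ℝ N (fun v : ℝ => expTaylorRemainder n (v * r) / (v : ℂ) ^ m) w
  simp only [div_eq_mul_inv]
  exact ((contDiff_expTaylorRemainder n).comp (contDiff_id.mul contDiff_const)).contDiffAt.mul
    ((hofReal.pow m).contDiffAt.inv (pow_ne_zero m (ofReal_ne_zero.mpr hw)))

lemma iteratedDeriv_succ_expRemainderDivPow_succ (k : ℕ) (hw : w ≠ 0) :
    iteratedDeriv (k + 1) (expRemainderDivPow (n + 1) m r) w =
      I * r * iteratedDeriv k (expRemainderDivPow n m r) w
        - m * iteratedDeriv k (expRemainderDivPow (n + 1) (m + 1) r) w := by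
  have hderiv : deriv (expRemainderDivPow (n + 1) m r) =ᶠ[𝓝 w]
      fun v => I * r * expRemainderDivPow n m r v - m * expRemainderDivPow (n + 1) (m + 1) r v := by
    filter_upwards [eventually_ne_nhds hw] with v hv
      using (hasDerivAt_expRemainderDivPow_succ n m r hv).deriv
  rw [iteratedDeriv_succ', hderiv.iteratedDeriv_eq, iteratedDeriv_fun_sub,
    iteratedDeriv_const_mul_field, iteratedDeriv_const_mul_field]
  · exact contDiffAt_const.mul (contDiffAt_expRemainderDivPow _ _ _ hw)
  · exact contDiffAt_const.mul (contDiffAt_expRemainderDivPow _ _ _ hw)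

end expRemainderDivPow

lemma norm_iteratedDeriv_expRemainderDivPow_le (k n m : ℕ) (r : ℝ) {w : ℝ} (hw : w ≠ 0) :
    |w| ^ (m + k) * ‖iteratedDeriv k (expRemainderDivPow (n + k) m r) w‖
      ≤ (m + k : ℝ) ^ k * (|r| * |w|) ^ (n + k) := by
  induction k generalizing n m with
  | zero =>
    have hwm : (0 : ℝ) < |w| ^ m := by positivity
    simp only [add_zero, Nat.cast_zero, pow_zero, one_mul]
    rw [iteratedDeriv_zero, expRemainderDivPow, norm_div, norm_pow, norm_real, Real.norm_eq_abs,
      mul_div_cancel₀ _ hwm.ne']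
    simpa [abs_mul, mul_comm] using norm_expTaylorRemainder_le n (w * r)
  | succ k ih =>
    set A := ‖iteratedDeriv k (expRemainderDivPow (n + k) m r) w‖
    set B := ‖iteratedDeriv k (expRemainderDivPow (n + k + 1) (m + 1) r) w‖
    set X := (|r| * |w|) ^ (n + k + 1)
    have hA : |w| ^ (m + k) * A ≤ (m + k : ℝ) ^ k * (|r| * |w|) ^ (n + k) := ih n m
    have hB : |w| ^ (m + k + 1) * B ≤ (m + 1 + k : ℝ) ^ k * X := by
      have := ih (n + 1) (m + 1)
      rw [Nat.add_right_comm n 1 k, Nat.add_right_comm m 1 k] at this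
      exact_mod_cast this
    simp only [← add_assoc]
    rw [iteratedDeriv_succ_expRemainderDivPow_succ _ _ _ _ hw]
    calc |w| ^ (m + k + 1) * ‖I * r * iteratedDeriv k (expRemainderDivPow (n + k) m r) w
            - m * iteratedDeriv k (expRemainderDivPow (n + k + 1) (m + 1) r) w‖
        ≤ |w| ^ (m + k + 1) * (|r| * A + m * B) := by
          gcongr
          refine (norm_sub_le _ _).trans_eq ?_
          simp [A, B]
      _ = |r| * |w| * (|w| ^ (m + k) * A) + m * (|w| ^ (m + k + 1) * B) := by ring
      _ ≤ |r| * |w| * ((m + k : ℝ) ^ k * (|r| * |w|) ^ (n + k))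
            + m * ((m + 1 + k : ℝ) ^ k * X) := by gcongr
      _ = ((m + k : ℝ) ^ k + m * (m + 1 + k : ℝ) ^ k) * X := by ring
      _ ≤ (m + ↑(k + 1) : ℝ) ^ (k + 1) * X := by
          have hk : (m + k : ℝ) ^ k ≤ (m + 1 + k) ^ k := by gcongr; linarith
          have hpos : (0 : ℝ) ≤ (m + 1 + k) ^ k := by positivity
          push_cast
          rw [pow_succ, add_assoc, add_comm (k : ℝ) 1, ← add_assoc]
          gcongr
          nlinarith

lemma abs_pow_mul_norm_iteratedDeriv_expRemainderDivPow_le {k n : ℕ} (hkn : k ≤ n) (r : ℝ)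
    {w : ℝ} (hw : w ≠ 0) :
    |w| ^ k * ‖iteratedDeriv k (expRemainderDivPow (n + 1) 1 r) w‖
      ≤ (1 + k : ℝ) ^ k * |r| ^ (n + 1) * |w| ^ n := by
  have hbound := norm_iteratedDeriv_expRemainderDivPow_le k (n + 1 - k) 1 r hw
  rw [Nat.sub_add_cancel (by omega)] at hbound
  refine le_of_mul_le_mul_left ?_ (abs_pos.mpr hw)
  calc |w| * (|w| ^ k * ‖iteratedDeriv k (expRemainderDivPow (n + 1) 1 r) w‖)
      = |w| ^ (1 + k) * ‖iteratedDeriv k (expRemainderDivPow (n + 1) 1 r) w‖ := by ring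
    _ ≤ (1 + k : ℝ) ^ k * (|r| * |w|) ^ (n + 1) := by exact_mod_cast hbound
    _ = |w| * ((1 + k : ℝ) ^ k * |r| ^ (n + 1) * |w| ^ n) := by ring

lemma abs_pow_le_sqrt_one_add_sq_pow (r : ℝ) {a b : ℕ} (hab : a ≤ b) :
    |r| ^ a ≤ Real.sqrt (1 + r ^ 2) ^ b := by
  have hone : 1 ≤ Real.sqrt (1 + r ^ 2) := Real.one_le_sqrt.mpr (by nlinarith)
  calc |r| ^ a ≤ Real.sqrt (1 + r ^ 2) ^ a := by
        gcongr; exact Real.abs_le_sqrt (by linarith)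
    _ ≤ Real.sqrt (1 + r ^ 2) ^ b := pow_le_pow_right₀ hone hab

lemma upper_resolvent_remainder_eq (r : ℝ) {w : ℝ} (hw : w ≠ 0) :
    I * exp (I * w * r) / (2 * w) - I / (2 * w) + r / 2 - ((r : ℂ) ^ 2 / (4 * I)) * w
      = I / 2 * expRemainderDivPow 3 1 r w := by
  have hw' : (w : ℂ) ≠ 0 := ofReal_ne_zero.mpr hw
  simp only [expRemainderDivPow, expTaylorRemainder]
  push_cast
  rw [mul_assoc I]
  field_simp
  ring_nf
  simp only [I_sq, I_pow_three, I_pow_four]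
  ring

/-- Remainder estimate for the Laurent expansion of the upper entry of the free
resolvent kernel (Lemma 4.1): with
`r₁(z,r) = i e^{izr}/(2z) − i/(2z) + r/2 − (r²/(4i)) z`, one has
`|z|^k |∂_z^k r₁(z,r)| ≤ C |z|² ⟨r⟩^{3+k}` for `0 < |z| < 1`, `r ≥ 0`, `k = 0,1,2`. -/
theorem upper_resolvent_remainder_bound :
    ∃ C : ℝ, 0 < C ∧
      ∀ (z : ℝ), 0 < |z| → |z| < 1 → ∀ (r : ℝ), 0 ≤ r → ∀ k : ℕ, k ≤ 2 →
        |z| ^ k * ‖iteratedDeriv k (fun w : ℝ =>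
            Complex.I * Complex.exp (Complex.I * (w : ℂ) * (r : ℂ)) / (2 * (w : ℂ))
              - Complex.I / (2 * (w : ℂ))
              + (r : ℂ) / 2
              - ((r : ℂ) ^ 2 / (4 * Complex.I)) * (w : ℂ)) z‖
          ≤ C * |z| ^ 2 * Real.sqrt (1 + r ^ 2) ^ (3 + k) := by
  refine ⟨9 / 2, by norm_num, fun z hz _ r _ k hk => ?_⟩
  have hz0 : z ≠ 0 := abs_pos.mp hz
  have hF : (fun w : ℝ => I * exp (I * w * r) / (2 * w) - I / (2 * w) + r / 2
      - ((r : ℂ) ^ 2 / (4 * I)) * w) =ᶠ[𝓝 z] fun w => I / 2 * expRemainderDivPow 3 1 r w := by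
    filter_upwards [eventually_ne_nhds hz0] with w hw using upper_resolvent_remainder_eq r hw
  have hconst : (1 + k : ℝ) ^ k ≤ 9 := by interval_cases k <;> norm_num
  rw [hF.iteratedDeriv_eq, iteratedDeriv_const_mul_field, norm_mul]
  calc |z| ^ k * (‖I / 2‖ * ‖iteratedDeriv k (expRemainderDivPow 3 1 r) z‖)
      = |z| ^ k * ‖iteratedDeriv k (expRemainderDivPow (2 + 1) 1 r) z‖ / 2 := by
        simp only [Complex.norm_div, norm_I, norm_ofNat, Nat.reduceAdd]; ring
    _ ≤ (1 + k : ℝ) ^ k * |r| ^ (2 + 1) * |z| ^ 2 / 2 := by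
      gcongr ?_ / 2
      exact abs_pow_mul_norm_iteratedDeriv_expRemainderDivPow_le (by omega) r hz0
    _ = (1 + k : ℝ) ^ k / 2 * |z| ^ 2 * |r| ^ 3 := by ring
    _ ≤ 9 / 2 * |z| ^ 2 * Real.sqrt (1 + r ^ 2) ^ (3 + k) := by
      gcongr
      exact abs_pow_le_sqrt_one_add_sq_pow r (by omega)
end

section
/- Let μ > 0. For z ∈ ℝ and r ≥ 0 define g_μ(z,r) := − e^{−√(z²+2μ) r} / (2 √(z²+2μ)) and r₂(z,r) := g_μ(z,r) − g_μ(0,r). Then there exists a constant C_μ > 0, depending only on μ, such that for all z with |z| < √(2μ), all r ≥ 0, and all k ∈ {0,1,2}, |z|^k | ∂_z^k r₂(z,r) | ≤ C_μ |z|² ⟨r⟩^{2+k}. -/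
open Real

/-!
With `s = √(z² + 2μ) ≥ √(2μ)` one has `∂_z g = z · G(s)` for
`G(s) = e^{-sr} (s⁻³ + r s⁻²) / 2` (`kernelSlope`), and `∂_z² g = G(s) + (z² / s) G'(s)`.
Using `e^{-sr} ≤ 1`, `s⁻¹ ≤ (2μ)^{-1/2}`, `z² ≤ s²` and `r ≤ ⟨r⟩`, every term is a monomial
`r^j s^{-i}` with `j ≤ 2`, which gives `|∂_z g| ≤ C |z| ⟨r⟩` and `|∂_z² g| ≤ C ⟨r⟩²`.
The case `k = 0` follows from the first bound by the mean value theorem on `[-|z|, |z|]`.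
-/

lemma abs_sub_le_mul_sq_of_abs_deriv_le {f f' : ℝ → ℝ} {K : ℝ} (hK : 0 ≤ K)
    (hf : ∀ x, HasDerivAt f (f' x) x) (hf' : ∀ x, |f' x| ≤ K * |x|) (z : ℝ) :
    |f z - f 0| ≤ K * z ^ 2 := by
  have h := (convex_Icc (-|z|) |z|).norm_image_sub_le_of_norm_hasDerivWithin_le
    (fun x _ => (hf x).hasDerivWithinAt) (fun x hx => (hf' x).trans
      (mul_le_mul_of_nonneg_left (abs_le.mpr ⟨hx.1, hx.2⟩) hK))
    (x := 0) (y := z) (by simp) ⟨neg_abs_le z, le_abs_self z⟩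
  rwa [Real.norm_eq_abs, Real.norm_eq_abs, sub_zero, mul_assoc, ← sq, sq_abs] at h

noncomputable def japaneseBracket (r : ℝ) : ℝ := √(1 + r ^ 2)

lemma one_le_japaneseBracket (r : ℝ) : 1 ≤ japaneseBracket r :=
  one_le_sqrt.mpr (by nlinarith)

lemma le_japaneseBracket (r : ℝ) : r ≤ japaneseBracket r :=
  le_sqrt_of_sq_le (by linarith)

noncomputable def sqrtSqAdd (c w : ℝ) : ℝ := √(w ^ 2 + c)

section sqrtSqAdd

variable {c : ℝ} (w : ℝ)

lemma sqrtSqAdd_pos (hc : 0 < c) : 0 < sqrtSqAdd c w := sqrt_pos.mpr (by positivity)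

lemma sqrt_le_sqrtSqAdd : √c ≤ sqrtSqAdd c w :=
  sqrt_le_sqrt (by nlinarith)

lemma sq_le_sqrtSqAdd_sq (hc : 0 ≤ c) : w ^ 2 ≤ sqrtSqAdd c w ^ 2 := by
  rw [sqrtSqAdd, sq_sqrt (by positivity)]; linarith

lemma hasDerivAt_sqrtSqAdd (hc : 0 < c) :
    HasDerivAt (sqrtSqAdd c) (w / sqrtSqAdd c w) w := by
  have h := ((hasDerivAt_pow 2 w).add_const c).sqrt (by positivity)
  refine h.congr_deriv ?_
  have := sqrtSqAdd_pos w hc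
  unfold sqrtSqAdd at this ⊢
  norm_num; field_simp

end sqrtSqAdd

/-- `g_μ(z, r)` as a function of `s = √(z² + 2μ)`. -/
noncomputable def kernelProfile (r s : ℝ) : ℝ := -exp (-s * r) / (2 * s)

noncomputable def kernelSlope (r s : ℝ) : ℝ := exp (-s * r) * (s⁻¹ ^ 3 + r * s⁻¹ ^ 2) / 2

noncomputable def kernelSlopeDeriv (r s : ℝ) : ℝ :=
  -exp (-s * r) * (3 * s⁻¹ ^ 4 + 3 * r * s⁻¹ ^ 3 + r ^ 2 * s⁻¹ ^ 2) / 2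

lemma hasDerivAt_exp_neg_mul (r s : ℝ) :
    HasDerivAt (fun s => exp (-s * r)) (-r * exp (-s * r)) s := by
  convert ((hasDerivAt_neg s).mul_const r).exp using 1; ring

section derivatives

variable {r s : ℝ}

lemma hasDerivAt_kernelProfile (hs : s ≠ 0) :
    HasDerivAt (kernelProfile r) (s * kernelSlope r s) s := by
  have h := (hasDerivAt_exp_neg_mul r s).fun_neg.fun_div ((hasDerivAt_id' s).const_mul 2)
    (by simpa)
  refine h.congr_deriv ?_
  simp only [kernelSlope]; field_simp; ring

lemma hasDerivAt_kernelSlope (hs : s ≠ 0) :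
    HasDerivAt (kernelSlope r) (kernelSlopeDeriv r s) s := by
  have hinv := hasDerivAt_inv hs
  have h := ((hasDerivAt_exp_neg_mul r s).fun_mul
    ((hinv.fun_pow 3).fun_add ((hinv.fun_pow 2).const_mul r))).div_const 2
  refine h.congr_deriv ?_
  simp only [kernelSlopeDeriv, inv_pow]; norm_num; field_simp; ring

end derivatives

section bounds

variable {b r s : ℝ}

lemma abs_kernelSlope_le (hr : 0 ≤ r) (hs : 0 < s) (hsb : s⁻¹ ≤ b) :
    |kernelSlope r s| ≤ (1 + b) ^ 3 * japaneseBracket r / 2 := by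
  have hR1 := one_le_japaneseBracket r
  have hb : 0 ≤ b := (inv_pos.mpr hs).le.trans hsb
  have hexp : exp (-s * r) ≤ 1 := exp_le_one_iff.mpr (by nlinarith)
  rw [kernelSlope, abs_of_nonneg (by positivity)]
  calc exp (-s * r) * (s⁻¹ ^ 3 + r * s⁻¹ ^ 2) / 2
      ≤ 1 * (b ^ 3 + japaneseBracket r * b ^ 2) / 2 := by
        gcongr; exact le_japaneseBracket r
    _ ≤ (1 + b) ^ 3 * japaneseBracket r / 2 := by
        gcongr ?_ / 2
        nlinarith [mul_nonneg (pow_nonneg hb 3) (sub_nonneg.mpr hR1)]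

lemma abs_sq_div_mul_kernelSlopeDeriv_le {w : ℝ} (hr : 0 ≤ r) (hs : 0 < s) (hsb : s⁻¹ ≤ b)
    (hw : w ^ 2 ≤ s ^ 2) :
    |w ^ 2 / s * kernelSlopeDeriv r s| ≤ 3 * (1 + b) ^ 3 * japaneseBracket r ^ 2 / 2 := by
  have hR1 := one_le_japaneseBracket r
  have hb : 0 ≤ b := (inv_pos.mpr hs).le.trans hsb
  have hexp : exp (-s * r) ≤ 1 := exp_le_one_iff.mpr (by nlinarith)
  have hws : w ^ 2 / s ≤ s := by rw [div_le_iff₀ hs]; nlinarith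
  set P := 3 * s⁻¹ ^ 4 + 3 * r * s⁻¹ ^ 3 + r ^ 2 * s⁻¹ ^ 2
  have hneg : w ^ 2 / s * kernelSlopeDeriv r s = -(w ^ 2 / s * exp (-s * r) * P / 2) := by
    rw [kernelSlopeDeriv]; ring
  rw [hneg, abs_neg, abs_of_nonneg (by positivity)]
  calc w ^ 2 / s * exp (-s * r) * P / 2 ≤ s * 1 * P / 2 := by gcongr
    _ = (3 * s⁻¹ ^ 3 + 3 * r * s⁻¹ ^ 2 + r ^ 2 * s⁻¹) / 2 := by simp only [P]; field_simp
    _ ≤ (3 * b ^ 3 + 3 * japaneseBracket r * b ^ 2 + japaneseBracket r ^ 2 * b) / 2 := by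
        have := le_japaneseBracket r
        gcongr
    _ ≤ 3 * (1 + b) ^ 3 * japaneseBracket r ^ 2 / 2 := by
        set R := japaneseBracket r
        have hRR : R ≤ R ^ 2 := by nlinarith
        gcongr ?_ / 2
        nlinarith [mul_nonneg (pow_nonneg hb 3) (sub_nonneg.mpr (hR1.trans hRR)),
          mul_nonneg (pow_nonneg hb 2) (sub_nonneg.mpr hRR)]

end bounds

/-- The remainder `r₂(z, r) = g_μ(z, r) - g_μ(0, r)`, with `c = 2μ`. -/
noncomputable def lowerRemainder (c r w : ℝ) : ℝ :=
  kernelProfile r (sqrtSqAdd c w) - kernelProfile r (sqrtSqAdd c 0)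

section lowerRemainder

variable {c : ℝ} (r w : ℝ)

lemma hasDerivAt_lowerRemainder (hc : 0 < c) :
    HasDerivAt (lowerRemainder c r) (w * kernelSlope r (sqrtSqAdd c w)) w := by
  have hs := sqrtSqAdd_pos w hc
  refine (((hasDerivAt_kernelProfile hs.ne').comp w
    (hasDerivAt_sqrtSqAdd w hc)).sub_const _).congr_deriv ?_
  field_simp

lemma deriv_lowerRemainder (hc : 0 < c) :
    deriv (lowerRemainder c r) = fun w => w * kernelSlope r (sqrtSqAdd c w) :=
  funext fun w => (hasDerivAt_lowerRemainder r w hc).deriv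

lemma iteratedDeriv_two_lowerRemainder (hc : 0 < c) :
    iteratedDeriv 2 (lowerRemainder c r) w = kernelSlope r (sqrtSqAdd c w)
      + w ^ 2 / sqrtSqAdd c w * kernelSlopeDeriv r (sqrtSqAdd c w) := by
  have hs := sqrtSqAdd_pos w hc
  rw [iteratedDeriv_succ, iteratedDeriv_one, deriv_lowerRemainder r hc]
  refine ((hasDerivAt_id' w).fun_mul ((hasDerivAt_kernelSlope hs.ne').comp w
    (hasDerivAt_sqrtSqAdd w hc))).deriv.trans ?_
  rw [Function.comp_apply]; ring

variable {r}

lemma inv_sqrtSqAdd_le (hc : 0 < c) : (sqrtSqAdd c w)⁻¹ ≤ (√c)⁻¹ :=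
  inv_anti₀ (sqrt_pos.mpr hc) (sqrt_le_sqrtSqAdd w)

lemma abs_deriv_lowerRemainder_le (hc : 0 < c) (hr : 0 ≤ r) :
    |deriv (lowerRemainder c r) w| ≤ (1 + (√c)⁻¹) ^ 3 * japaneseBracket r / 2 * |w| := by
  rw [deriv_lowerRemainder r hc, abs_mul, mul_comm |w|]
  gcongr
  exact abs_kernelSlope_le hr (sqrtSqAdd_pos w hc) (inv_sqrtSqAdd_le w hc)

lemma abs_lowerRemainder_le (hc : 0 < c) (hr : 0 ≤ r) :
    |lowerRemainder c r w| ≤ (1 + (√c)⁻¹) ^ 3 * japaneseBracket r / 2 * w ^ 2 := by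
  simpa [lowerRemainder] using abs_sub_le_mul_sq_of_abs_deriv_le
    (by unfold japaneseBracket; positivity)
    (fun w => (hasDerivAt_lowerRemainder r w hc).differentiableAt.hasDerivAt)
    (fun w => abs_deriv_lowerRemainder_le w hc hr) w

lemma abs_iteratedDeriv_two_lowerRemainder_le (hc : 0 < c) (hr : 0 ≤ r) :
    |iteratedDeriv 2 (lowerRemainder c r) w| ≤ 2 * (1 + (√c)⁻¹) ^ 3 * japaneseBracket r ^ 2 := by
  have hs := sqrtSqAdd_pos w hc
  have hR := one_le_japaneseBracket r
  rw [iteratedDeriv_two_lowerRemainder r w hc]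
  calc _ ≤ (1 + (√c)⁻¹) ^ 3 * japaneseBracket r / 2
        + 3 * (1 + (√c)⁻¹) ^ 3 * japaneseBracket r ^ 2 / 2 :=
        (abs_add_le _ _).trans (add_le_add
          (abs_kernelSlope_le hr hs (inv_sqrtSqAdd_le w hc))
          (abs_sq_div_mul_kernelSlopeDeriv_le hr hs (inv_sqrtSqAdd_le w hc)
            (sq_le_sqrtSqAdd_sq w hc.le)))
    _ ≤ _ := by
        have : japaneseBracket r ≤ japaneseBracket r ^ 2 := by nlinarith
        have : 0 ≤ (1 + (√c)⁻¹) ^ 3 := by positivity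
        nlinarith

lemma abs_pow_mul_iteratedDeriv_lowerRemainder_le (hc : 0 < c) (hr : 0 ≤ r) {k : ℕ}
    (hk : k ≤ 2) :
    |w| ^ k * |iteratedDeriv k (lowerRemainder c r) w|
      ≤ 2 * (1 + (√c)⁻¹) ^ 3 * |w| ^ 2 * japaneseBracket r ^ (2 + k) := by
  have hmono : ∀ m ≤ 2 + k, (1 + (√c)⁻¹) ^ 3 * |w| ^ 2 * japaneseBracket r ^ m
      ≤ (1 + (√c)⁻¹) ^ 3 * |w| ^ 2 * japaneseBracket r ^ (2 + k) :=
    fun m hm => by have := one_le_japaneseBracket r; gcongr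
  have hmono1 := pow_one (japaneseBracket r) ▸ hmono 1 (by omega)
  have hnonneg : 0 ≤ (1 + (√c)⁻¹) ^ 3 * |w| ^ 2 * japaneseBracket r := by
    unfold japaneseBracket; positivity
  interval_cases k <;> simp only [Nat.reduceAdd] at hmono hmono1 ⊢
  · have h0 := abs_lowerRemainder_le w hc hr
    rw [← sq_abs] at h0
    rw [iteratedDeriv_zero, pow_zero, one_mul]
    linarith
  · have h1 := mul_le_mul_of_nonneg_left (abs_deriv_lowerRemainder_le w hc hr) (abs_nonneg w)
    rw [iteratedDeriv_one, pow_one]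
    linarith
  · have h2 := mul_le_mul_of_nonneg_left (abs_iteratedDeriv_two_lowerRemainder_le w hc hr)
      (sq_nonneg |w|)
    linarith [hmono 2 (by omega)]

end lowerRemainder

/-- Remainder estimate for the Taylor expansion of the lower entry of the free
resolvent kernel (Lemma 4.1): with `g_μ(z,r) = −e^{−√(z²+2μ) r}/(2√(z²+2μ))` and
`r₂(z,r) = g_μ(z,r) − g_μ(0,r)`, one has
`|z|^k |∂_z^k r₂(z,r)| ≤ C_μ |z|² ⟨r⟩^{2+k}` for `|z| < √(2μ)`, `r ≥ 0`, `k = 0,1,2`. -/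
theorem lower_resolvent_remainder_bound (μ : ℝ) (hμ : 0 < μ) :
    ∃ C : ℝ, 0 < C ∧
      ∀ (z : ℝ), |z| < Real.sqrt (2 * μ) → ∀ (r : ℝ), 0 ≤ r → ∀ k : ℕ, k ≤ 2 →
        |z| ^ k * |iteratedDeriv k (fun w : ℝ =>
            (-(Real.exp (-(Real.sqrt (w ^ 2 + 2 * μ)) * r)) / (2 * Real.sqrt (w ^ 2 + 2 * μ)))
            - (-(Real.exp (-(Real.sqrt ((0 : ℝ) ^ 2 + 2 * μ)) * r))
                / (2 * Real.sqrt ((0 : ℝ) ^ 2 + 2 * μ)))) z|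
          ≤ C * |z| ^ 2 * Real.sqrt (1 + r ^ 2) ^ (2 + k) :=
  ⟨2 * (1 + (√(2 * μ))⁻¹) ^ 3, by positivity, fun z _ r hr _ hk =>
    abs_pow_mul_iteratedDeriv_lowerRemainder_le z (by positivity) hr hk⟩
end

section
/- Let m > 0 and r ≥ 0, and define g : ℝ → ℝ by g(x) := e^{−r √(x²+m²)} / √(x²+m²). Then there exists a constant C_m > 0, depending only on m (and in particular independent of r), such that ‖∂_x^k g‖_{L^∞(ℝ)} ≤ C_m for each k ∈ {0,1,2}. -/
/-!
Write `S = √(x² + m²)`, so that `S ≥ m` and `S ≥ |x|`, and `t = r S ≥ 0`. Then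
`g = e^{-t} / S`, `g' = -x e^{-t} (t + 1) / S³` and
`g'' = e^{-t} (x² (t² + 3t + 3) - S² (t + 1)) / S⁵`.
The parameter `r` only enters through `e^{-t}` times a polynomial in `t`, and both
`e^{-t} (t + 1) ≤ 1` and `e^{-t} (t + 2)² ≤ 4` follow from `1 + s ≤ e^s`. Hence
`|g| ≤ 1/m`, `|g'| ≤ 1/m²` and `|g''| ≤ 4/m³`, uniformly in `r ≥ 0`.
-/

open Real

lemma exp_neg_mul_add_one_le_one (t : ℝ) : exp (-t) * (t + 1) ≤ 1 := by
  calc exp (-t) * (t + 1) ≤ exp (-t) * exp t := by gcongr; exact add_one_le_exp t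
    _ = 1 := by rw [← exp_add, neg_add_cancel, exp_zero]

lemma exp_neg_mul_add_two_sq_le_four {t : ℝ} (ht : -2 ≤ t) : exp (-t) * (t + 2) ^ 2 ≤ 4 := by
  have key : (t + 2) ^ 2 ≤ 4 * exp t := by
    calc (t + 2) ^ 2 = 4 * (t / 2 + 1) ^ 2 := by ring
      _ ≤ 4 * exp (t / 2) ^ 2 := by gcongr; linarith; exact add_one_le_exp _
      _ = 4 * exp t := by rw [sq, ← exp_add, add_halves]
  calc exp (-t) * (t + 2) ^ 2 ≤ exp (-t) * (4 * exp t) := by gcongr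
    _ = 4 := by rw [mul_left_comm, ← exp_add, neg_add_cancel, exp_zero, mul_one]

lemma abs_le_sqrt_sq_add_sq (x m : ℝ) : |x| ≤ √(x ^ 2 + m ^ 2) :=
  abs_le_sqrt (by nlinarith [sq_nonneg m])

lemma le_sqrt_sq_add_sq (x m : ℝ) : m ≤ √(x ^ 2 + m ^ 2) :=
  (le_abs_self m).trans (abs_le_sqrt (by nlinarith [sq_nonneg x]))

lemma hasDerivAt_sqrt_sq_add_sq {m : ℝ} (hm : m ≠ 0) (x : ℝ) :
    HasDerivAt (fun y => √(y ^ 2 + m ^ 2)) (x / √(x ^ 2 + m ^ 2)) x := by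
  have h := ((hasDerivAt_pow 2 x).add_const (m ^ 2)).sqrt (by positivity)
  convert h using 1
  field_simp
  ring

noncomputable def sechKernel (m r x : ℝ) : ℝ :=
  exp (-r * √(x ^ 2 + m ^ 2)) / √(x ^ 2 + m ^ 2)

noncomputable def sechKernelDeriv (m r x : ℝ) : ℝ :=
  -(x * (exp (-r * √(x ^ 2 + m ^ 2)) * (r * √(x ^ 2 + m ^ 2) + 1))) / √(x ^ 2 + m ^ 2) ^ 3

noncomputable def sechKernelDeriv2 (m r x : ℝ) : ℝ :=
  exp (-r * √(x ^ 2 + m ^ 2)) *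
      (x ^ 2 * ((r * √(x ^ 2 + m ^ 2)) ^ 2 + 3 * (r * √(x ^ 2 + m ^ 2)) + 3) -
        √(x ^ 2 + m ^ 2) ^ 2 * (r * √(x ^ 2 + m ^ 2) + 1)) / √(x ^ 2 + m ^ 2) ^ 5

section Derivatives

variable {m : ℝ} (r : ℝ) (hm : m ≠ 0)
include hm

lemma hasDerivAt_sechKernel (x : ℝ) :
    HasDerivAt (sechKernel m r) (sechKernelDeriv m r x) x := by
  have hS := hasDerivAt_sqrt_sq_add_sq hm x
  have hS0 : √(x ^ 2 + m ^ 2) ≠ 0 := by positivity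
  refine (((hS.const_mul (-r)).exp).div hS hS0).congr_deriv ?_
  rw [sechKernelDeriv]
  field_simp
  ring

lemma hasDerivAt_sechKernelDeriv (x : ℝ) :
    HasDerivAt (sechKernelDeriv m r) (sechKernelDeriv2 m r x) x := by
  have hS := hasDerivAt_sqrt_sq_add_sq hm x
  have hS0 : √(x ^ 2 + m ^ 2) ≠ 0 := by positivity
  refine ((((hasDerivAt_id' x).fun_mul (((hS.const_mul (-r)).exp).fun_mul
    ((hS.const_mul r).add_const 1))).fun_neg).fun_div (hS.fun_pow 3)
      (pow_ne_zero 3 hS0)).congr_deriv ?_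
  rw [sechKernelDeriv2]
  field_simp
  ring

lemma deriv_sechKernel : deriv (sechKernel m r) = sechKernelDeriv m r :=
  funext fun x => (hasDerivAt_sechKernel r hm x).deriv

lemma deriv_sechKernelDeriv : deriv (sechKernelDeriv m r) = sechKernelDeriv2 m r :=
  funext fun x => (hasDerivAt_sechKernelDeriv r hm x).deriv

end Derivatives

section Bounds

variable {m r : ℝ} (hm : 0 < m) (hr : 0 ≤ r)
include hm hr

lemma abs_sechKernel_le (x : ℝ) : |sechKernel m r x| ≤ 1 / m := by
  set S := √(x ^ 2 + m ^ 2)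
  have hmS : m ≤ S := le_sqrt_sq_add_sq x m
  have hE : exp (-r * S) ≤ 1 := exp_le_one_iff.mpr (by nlinarith)
  calc |sechKernel m r x| = exp (-r * S) / S := abs_of_pos (by unfold sechKernel; positivity)
    _ ≤ 1 / S := by gcongr
    _ ≤ 1 / m := by gcongr

lemma abs_sechKernelDeriv_le (x : ℝ) : |sechKernelDeriv m r x| ≤ 1 / m ^ 2 := by
  rw [sechKernelDeriv]
  set S := √(x ^ 2 + m ^ 2)
  have hmS : m ≤ S := le_sqrt_sq_add_sq x m
  have hS : 0 < S := hm.trans_le hmS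
  have hxS : |x| ≤ S := abs_le_sqrt_sq_add_sq x m
  have hE : exp (-(r * S)) * (r * S + 1) ≤ 1 := exp_neg_mul_add_one_le_one _
  calc _ = |x| * (exp (-(r * S)) * (r * S + 1)) / S ^ 3 := by
        rw [abs_div, abs_neg, abs_mul, abs_of_pos (pow_pos hS 3), neg_mul,
          abs_of_nonneg (by positivity : 0 ≤ exp (-(r * S)) * (r * S + 1))]
    _ ≤ S * 1 / S ^ 3 := by gcongr
    _ = 1 / S ^ 2 := by field_simp
    _ ≤ 1 / m ^ 2 := by gcongr

lemma abs_sechKernelDeriv2_le (x : ℝ) : |sechKernelDeriv2 m r x| ≤ 4 / m ^ 3 := by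
  rw [sechKernelDeriv2]
  set S := √(x ^ 2 + m ^ 2)
  set t := r * S
  have hmS : m ≤ S := le_sqrt_sq_add_sq x m
  have hS : 0 < S := hm.trans_le hmS
  have hxS : x ^ 2 ≤ S ^ 2 := by
    simpa only [sq_abs] using pow_le_pow_left₀ (abs_nonneg x) (abs_le_sqrt_sq_add_sq x m) 2
  have ht : 0 ≤ t := by positivity
  have hN : |x ^ 2 * (t ^ 2 + 3 * t + 3) - S ^ 2 * (t + 1)| ≤ S ^ 2 * (t + 2) ^ 2 := by
    rw [abs_le]; constructor <;> nlinarith [sq_nonneg x, sq_nonneg S]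
  have hE : exp (-t) * (t + 2) ^ 2 ≤ 4 := exp_neg_mul_add_two_sq_le_four (by linarith)
  calc _ = exp (-t) * |x ^ 2 * (t ^ 2 + 3 * t + 3) - S ^ 2 * (t + 1)| / S ^ 5 := by
        rw [abs_div, abs_mul, abs_of_pos (exp_pos _), abs_of_pos (pow_pos hS 5), neg_mul]
    _ ≤ exp (-t) * (S ^ 2 * (t + 2) ^ 2) / S ^ 5 := by gcongr
    _ = exp (-t) * (t + 2) ^ 2 / S ^ 3 := by field_simp
    _ ≤ 4 / S ^ 3 := by gcongr
    _ ≤ 4 / m ^ 3 := by gcongr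

end Bounds

/-- Lemma 5.1: for `m > 0` and `r ≥ 0`, the function
`g(x) = e^{−r√(x²+m²)}/√(x²+m²)` satisfies `‖∂_x^k g‖_{L^∞} ≤ C_m` for `k = 0,1,2`,
with `C_m` depending only on `m` (independent of `r`). -/
theorem sech_type_kernel_derivative_bound (m : ℝ) (hm : 0 < m) :
    ∃ C : ℝ, 0 < C ∧
      ∀ (r : ℝ), 0 ≤ r → ∀ k : ℕ, k ≤ 2 → ∀ x : ℝ,
        |iteratedDeriv k
            (fun y : ℝ => Real.exp (-r * Real.sqrt (y ^ 2 + m ^ 2))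
              / Real.sqrt (y ^ 2 + m ^ 2)) x| ≤ C := by
  refine ⟨1 / m + 1 / m ^ 2 + 4 / m ^ 3, by positivity, fun r hr k hk x => ?_⟩
  change |iteratedDeriv k (sechKernel m r) x| ≤ _
  have h₀ := abs_sechKernel_le hm hr x
  have h₁ := abs_sechKernelDeriv_le hm hr x
  have h₂ := abs_sechKernelDeriv2_le hm hr x
  obtain ⟨p₀, p₁, p₂⟩ : 0 < 1 / m ∧ 0 < 1 / m ^ 2 ∧ 0 < 4 / m ^ 3 :=
    ⟨by positivity, by positivity, by positivity⟩
  interval_cases k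
  · rw [iteratedDeriv_zero]; linarith
  · rw [iteratedDeriv_one, deriv_sechKernel r hm.ne']; linarith
  · rw [iteratedDeriv_succ', iteratedDeriv_one, deriv_sechKernel r hm.ne',
      deriv_sechKernelDeriv r hm.ne']
    linarith
end

section
/- One has ∫_ℝ e^{√2 · y} ( 2 sech²(y) − 6 sech⁴(y) ) dy = 0 and ∫_ℝ e^{−√2 · y} ( 2 sech²(y) − 6 sech⁴(y) ) dy = 0. -/
/-! With `s² = 2`, the identity `tanh² + sech² = 1` makes `e^{sy} (2 sech² y - 6 sech⁴ y)` the
derivative of `-e^{sy} sech² y (s + 2 tanh y)`. As `|s| < 2`, the weight `e^{sy} sech² y` is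
dominated by `4 e^{(s ± 2) y}`, hence integrable and vanishing at `±∞`, and the other factors are
bounded. So the integral is the difference of the limits of the primitive at `±∞`, which is `0`,
for both signs `s = ±√2`. -/

open MeasureTheory Real

noncomputable def sech (x : ℝ) : ℝ := (Real.cosh x)⁻¹

open Filter Set
open scoped Topology

@[fun_prop]
lemma continuous_sech : Continuous sech :=
  continuous_cosh.inv₀ fun y => (cosh_pos y).ne'

lemma sech_pos (y : ℝ) : 0 < sech y := inv_pos.mpr (cosh_pos y)

lemma sech_sq_le_one (y : ℝ) : sech y ^ 2 ≤ 1 :=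
  pow_le_one₀ (sech_pos y).le (inv_le_one_of_one_le₀ (one_le_cosh y))

lemma tanh_sq_add_sech_sq (y : ℝ) : tanh y ^ 2 + sech y ^ 2 = 1 := by
  have hc := (cosh_pos y).ne'
  rw [sech, tanh_eq_sinh_div_cosh]
  field_simp
  linear_combination -(cosh_sq' y)

lemma sech_le_two_mul_exp (y : ℝ) : sech y ≤ 2 * exp y := by
  rw [sech, cosh_eq, inv_le_comm₀ (by positivity) (by positivity), mul_inv, ← exp_neg]
  linarith [exp_pos y]

lemma sech_le_two_mul_exp_neg (y : ℝ) : sech y ≤ 2 * exp (-y) := by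
  simpa [sech] using sech_le_two_mul_exp (-y)

lemma hasDerivAt_sech (y : ℝ) : HasDerivAt sech (-(sech y * tanh y)) y :=
  ((hasDerivAt_cosh y).inv (cosh_pos y).ne').congr_deriv <| by
    rw [sech, tanh_eq_sinh_div_cosh]
    ring

lemma Real.hasDerivAt_tanh (y : ℝ) : HasDerivAt tanh (sech y ^ 2) y := by
  have hc := (cosh_pos y).ne'
  rw [show tanh = fun x => sinh x / cosh x from funext tanh_eq_sinh_div_cosh]
  refine ((hasDerivAt_sinh y).div (hasDerivAt_cosh y) hc).congr_deriv ?_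
  rw [sech]
  field_simp
  linear_combination cosh_sq' y

lemma exp_mul_mul_sech_sq_le_add (s y : ℝ) :
    exp (s * y) * sech y ^ 2 ≤ 4 * exp ((s + 2) * y) :=
  calc exp (s * y) * sech y ^ 2 ≤ exp (s * y) * (2 * exp y) ^ 2 := by
        gcongr
        exacts [(sech_pos y).le, sech_le_two_mul_exp y]
    _ = 4 * exp ((s + 2) * y) := by
        rw [show (s + 2) * y = s * y + y + y by ring, exp_add, exp_add]
        ring

lemma exp_mul_mul_sech_sq_le_sub (s y : ℝ) :
    exp (s * y) * sech y ^ 2 ≤ 4 * exp ((s - 2) * y) :=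
  calc exp (s * y) * sech y ^ 2 ≤ exp (s * y) * (2 * exp (-y)) ^ 2 := by
        gcongr
        exacts [(sech_pos y).le, sech_le_two_mul_exp_neg y]
    _ = 4 * exp ((s - 2) * y) := by
        rw [show (s - 2) * y = s * y + -y + -y by ring, exp_add, exp_add]
        ring

section

variable {s : ℝ}

lemma integrable_exp_mul_mul_sech_sq (hs : |s| < 2) :
    Integrable (fun y => exp (s * y) * sech y ^ 2) := by
  obtain ⟨hs_lower, hs_upper⟩ := abs_lt.mp hs
  have hcont : Continuous fun y => exp (s * y) * sech y ^ 2 := by fun_prop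
  have hnorm (y : ℝ) : ‖exp (s * y) * sech y ^ 2‖ = exp (s * y) * sech y ^ 2 :=
    Real.norm_of_nonneg (by positivity)
  rw [← integrableOn_univ, ← Iic_union_Ioi (a := 0), integrableOn_union]
  constructor
  · refine ((integrableOn_exp_mul_Iic (a := s + 2) (by linarith) 0).const_mul 4).mono'
      hcont.aestronglyMeasurable (.of_forall fun y => ?_)
    simpa only [hnorm] using exp_mul_mul_sech_sq_le_add s y
  · refine ((integrableOn_exp_mul_Ioi (a := s - 2) (by linarith) 0).const_mul 4).mono'
      hcont.aestronglyMeasurable (.of_forall fun y => ?_)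
    simpa only [hnorm] using exp_mul_mul_sech_sq_le_sub s y

lemma tendsto_exp_mul_mul_sech_sq_atTop (hs : s < 2) :
    Tendsto (fun y => exp (s * y) * sech y ^ 2) atTop (𝓝 0) := by
  have hbound : Tendsto (fun y => 4 * exp ((s - 2) * y)) atTop (𝓝 0) := by
    simpa using ((tendsto_exp_atBot.comp
      (tendsto_id.const_mul_atTop_of_neg (sub_neg.mpr hs))).const_mul 4)
  exact squeeze_zero (fun y => by positivity) (exp_mul_mul_sech_sq_le_sub s) hbound

lemma tendsto_exp_mul_mul_sech_sq_atBot (hs : -2 < s) :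
    Tendsto (fun y => exp (s * y) * sech y ^ 2) atBot (𝓝 0) := by
  have hbound : Tendsto (fun y => 4 * exp ((s + 2) * y)) atBot (𝓝 0) := by
    simpa using ((tendsto_exp_atBot.comp
      (tendsto_id.const_mul_atBot (by linarith : 0 < s + 2))).const_mul 4)
  exact squeeze_zero (fun y => by positivity) (exp_mul_mul_sech_sq_le_add s) hbound

lemma hasDerivAt_neg_exp_mul_mul_sech_sq_mul (hs : s ^ 2 = 2) (y : ℝ) :
    HasDerivAt (fun y => -(exp (s * y) * sech y ^ 2 * (s + 2 * tanh y)))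
      (exp (s * y) * (2 * sech y ^ 2 - 6 * sech y ^ 4)) y := by
  have hexp := ((hasDerivAt_id' y).const_mul s).exp
  have hsech := (hasDerivAt_sech y).fun_pow 2
  have htanh := ((hasDerivAt_tanh y).const_mul 2).const_add s
  refine ((hexp.fun_mul hsech).fun_mul htanh).fun_neg.congr_deriv ?_
  linear_combination (-(exp (s * y) * sech y ^ 2)) * hs
    + (4 * exp (s * y) * sech y ^ 2) * tanh_sq_add_sech_sq y

theorem integral_exp_mul_two_sech_sq_sub_six_sech_pow_four_eq_zero (hs : s ^ 2 = 2) :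
    ∫ y, exp (s * y) * (2 * sech y ^ 2 - 6 * sech y ^ 4) = 0 := by
  have habs : |s| < 2 := abs_lt_of_sq_lt_sq (by rw [hs]; norm_num) zero_le_two
  obtain ⟨hs_lower, hs_upper⟩ := abs_lt.mp habs
  have hsource_bdd (y : ℝ) : ‖2 - 6 * sech y ^ 2‖ ≤ 4 := by
    rw [Real.norm_eq_abs, abs_le]
    constructor <;> nlinarith [sech_sq_le_one y, sech_pos y]
  have htanh_bdd (y : ℝ) : ‖s + 2 * tanh y‖ ≤ |s| + 2 := by
    rw [Real.norm_eq_abs]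
    calc |s + 2 * tanh y| ≤ |s| + |2 * tanh y| := abs_add_le _ _
      _ ≤ |s| + 2 := by rw [abs_mul, abs_two]; linarith [abs_tanh_lt_one y]
  have hint : Integrable fun y => exp (s * y) * (2 * sech y ^ 2 - 6 * sech y ^ 4) := by
    refine ((integrable_exp_mul_mul_sech_sq habs).mul_bdd (by fun_prop)
      (.of_forall hsource_bdd)).congr (.of_forall fun y => ?_)
    ring
  have hdecay {l : Filter ℝ} (hw : Tendsto (fun y => exp (s * y) * sech y ^ 2) l (𝓝 0)) :
      Tendsto (fun y => -(exp (s * y) * sech y ^ 2 * (s + 2 * tanh y))) l (𝓝 0) := by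
    simpa using (hw.zero_mul_isBoundedUnder_le
      (isBoundedUnder_of ⟨|s| + 2, htanh_bdd⟩)).neg
  simpa using integral_of_hasDerivAt_of_tendsto (hasDerivAt_neg_exp_mul_mul_sech_sq_mul hs) hint
    (hdecay (tendsto_exp_mul_mul_sech_sq_atBot hs_lower))
    (hdecay (tendsto_exp_mul_mul_sech_sq_atTop hs_upper))

end

/-- Lemma 1.4 (vanishing bilateral Laplace transform condition (A6) for the 1D
focusing cubic NLS): `∫ e^{±√2 y} (2 sech²(y) − 6 sech⁴(y)) dy = 0`. -/
theorem vanishing_laplace_transform_cubic_NLS :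
    (∫ y : ℝ, Real.exp (Real.sqrt 2 * y) * (2 * sech y ^ 2 - 6 * sech y ^ 4)) = 0 ∧
    (∫ y : ℝ, Real.exp (-(Real.sqrt 2) * y) * (2 * sech y ^ 2 - 6 * sech y ^ 4)) = 0 :=
  have hsqrt : sqrt 2 ^ 2 = 2 := sq_sqrt zero_le_two
  ⟨integral_exp_mul_two_sech_sq_sub_six_sech_pow_four_eq_zero hsqrt,
    integral_exp_mul_two_sech_sq_sub_six_sech_pow_four_eq_zero (by rwa [neg_sq])⟩
end
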